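/- arXiv:2101.12061 — 10 statements merged into one kernel-verified Lean document; each statement's English description precedes it below -/
import Mathlib

section
/- For all n ≥ k ≥ 2, the number of permutations of [n] avoiding the partially ordered pattern Q_k equals (k-1)! · (k-1)^{n-k+1}. -/
/-!
Containment of `Q_k` is decided by the first entry: `π` contains `Q_k` iff its first value has
at least `k - 1` smaller values (all of which sit to its right), or the standardization of
the entries after the first contains `Q_k`. So an avoider of length `n + 1` is a first value among the `k - 1`
smallest together with an avoider of length `n`, and every permutation of length at most
`k - 1` avoids `Q_k`; hence there are `(k - 1)! · (k - 1) ^ m` avoiders of length `k - 1 + m`.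
-/

/-- A permutation `π` of `Fin n` contains the POP `Q_k` (poset on `{1,…,k}` where
element 1 is greater than every other element) iff there is a position `i`
followed by `k-1` increasing positions, all of whose values are smaller than `π i`. -/
def ContainsQ (k n : ℕ) (π : Equiv.Perm (Fin n)) : Prop :=
  ∃ (i : Fin n) (f : Fin (k - 1) → Fin n), StrictMono f ∧
    (∀ j, i < f j) ∧ ∀ j, π (f j) < π i

open Finset

lemma sub_one_le_of_containsQ_witness {k n : ℕ} (π : Equiv.Perm (Fin n)) (i : Fin n)
    {f : Fin (k - 1) → Fin n} (hf : Function.Injective f) (hv : ∀ j, π (f j) < π i) :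
    k - 1 ≤ (π i : ℕ) := by
  simpa using card_le_card_of_injOn (s := univ) (t := Iio (π i)) (⇑π ∘ f)
    (fun j _ ↦ mem_Iio.mpr (hv j)) (π.injective.comp hf).injOn

lemma not_containsQ_of_le {k m : ℕ} (hm : m ≤ k - 1) (π : Equiv.Perm (Fin m)) :
    ¬ ContainsQ k m π := by
  rintro ⟨i, f, hf, -, hv⟩
  have := sub_one_le_of_containsQ_witness π i hf.injective hv
  omega

lemma containsQ_of_sub_one_le_apply_zero {k n : ℕ} (π : Equiv.Perm (Fin (n + 1)))
    (h : k - 1 ≤ (π 0 : ℕ)) : ContainsQ k (n + 1) π := by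
  let T := (Iio (π 0)).map π.symm.toEmbedding
  obtain ⟨S, hST, hS⟩ := exists_subset_card_eq (s := T) (n := k - 1) (by simpa [T] using h)
  let f := S.orderEmbOfFin hS
  have hv : ∀ j, π (f j) < π 0 := fun j ↦ by
    obtain ⟨v, hv, hfv⟩ := mem_map.mp (hST (S.orderEmbOfFin_mem hS j))
    rw [← hfv, Equiv.toEmbedding_apply, Equiv.apply_symm_apply]
    exact mem_Iio.mp hv
  refine ⟨0, f, f.strictMono, fun j ↦ Fin.pos_iff_ne_zero.mpr fun h0 ↦ ?_, hv⟩
  simpa [h0] using hv j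

/-- The standardization of `π 1, …, π n`. -/
def permTail {n : ℕ} (π : Equiv.Perm (Fin (n + 1))) : Equiv.Perm (Fin n) :=
  Equiv.removeNone ((finSuccEquiv n).symm.trans (π.trans (finSuccEquiv' (π 0))))

lemma permTail_spec {n : ℕ} (π : Equiv.Perm (Fin (n + 1))) (j : Fin n) :
    π j.succ = (π 0).succAbove (permTail π j) := by
  obtain ⟨y, hy⟩ := Fin.exists_succAbove_eq fun h ↦ Fin.succ_ne_zero j (π.injective h)
  set e := (finSuccEquiv n).symm.trans (π.trans (finSuccEquiv' (π 0)))
  have hsome : e (some j) = some y := by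
    simp only [e, Equiv.trans_apply, finSuccEquiv_symm_some, ← hy, finSuccEquiv'_succAbove]
  have := Equiv.removeNone_some e ⟨y, hsome⟩
  rw [hsome] at this
  rw [show permTail π j = y from Option.some_injective _ this, hy]

/-- The permutation with first value `p` whose tail has the pattern `σ`. -/
def permCons {n : ℕ} (p : Fin (n + 1)) (σ : Equiv.Perm (Fin n)) : Equiv.Perm (Fin (n + 1)) :=
  (finSuccEquiv n).trans ((Equiv.optionCongr σ).trans (finSuccEquiv' p).symm)

@[simp]
lemma permCons_zero {n : ℕ} (p : Fin (n + 1)) (σ : Equiv.Perm (Fin n)) : permCons p σ 0 = p := by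
  simp [permCons]

@[simp]
lemma permCons_succ {n : ℕ} (p : Fin (n + 1)) (σ : Equiv.Perm (Fin n)) (j : Fin n) :
    permCons p σ j.succ = p.succAbove (σ j) := by
  simp [permCons]

def permHeadTailEquiv (n : ℕ) : Equiv.Perm (Fin (n + 1)) ≃ Fin (n + 1) × Equiv.Perm (Fin n) where
  toFun π := (π 0, permTail π)
  invFun x := permCons x.1 x.2
  left_inv π := by
    ext x
    induction x using Fin.cases with
    | zero => rw [permCons_zero]
    | succ j => rw [permCons_succ, ← permTail_spec]
  right_inv := fun ⟨p, σ⟩ ↦ Prod.ext (permCons_zero p σ) <| Equiv.ext fun j ↦ by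
    have := permTail_spec (permCons p σ) j
    rw [permCons_zero, permCons_succ] at this
    exact (Fin.succAbove_right_injective this).symm

lemma containsQ_permTail_of_succ {k n : ℕ} {π : Equiv.Perm (Fin (n + 1))} {i : Fin n}
    {f : Fin (k - 1) → Fin (n + 1)} (hf : StrictMono f) (hfi : ∀ j, i.succ < f j)
    (hv : ∀ j, π (f j) < π i.succ) : ContainsQ k n (permTail π) := by
  have hpos : ∀ j, ∃ m : Fin n, f j = m.succ := fun j ↦
    Fin.eq_succ_of_ne_zero fun h0 ↦ Fin.not_lt_zero _ (h0 ▸ hfi j)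
  choose g hg using hpos
  refine ⟨i, g, fun a b hab ↦ ?_, fun j ↦ ?_, fun j ↦ ?_⟩
  · simpa [hg] using hf hab
  · simpa [hg] using hfi j
  · simpa [hg, permTail_spec, Fin.succAbove_lt_succAbove_iff] using hv j

lemma containsQ_of_containsQ_permTail {k n : ℕ} {π : Equiv.Perm (Fin (n + 1))}
    (h : ContainsQ k n (permTail π)) : ContainsQ k (n + 1) π := by
  obtain ⟨i, f, hf, hfi, hv⟩ := h
  refine ⟨i.succ, fun j ↦ (f j).succ, fun a b hab ↦ ?_, fun j ↦ ?_, fun j ↦ ?_⟩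
  · simpa using hf hab
  · simpa using hfi j
  · simpa [permTail_spec, Fin.succAbove_lt_succAbove_iff] using hv j

lemma containsQ_succ_iff {k n : ℕ} (π : Equiv.Perm (Fin (n + 1))) :
    ContainsQ k (n + 1) π ↔ k - 1 ≤ (π 0 : ℕ) ∨ ContainsQ k n (permTail π) := by
  refine ⟨fun ⟨i, f, hf, hfi, hv⟩ ↦ ?_, fun h ↦ ?_⟩
  · rcases Fin.eq_zero_or_eq_succ i with rfl | ⟨i, rfl⟩
    · exact .inl (sub_one_le_of_containsQ_witness π 0 hf.injective hv)
    · exact .inr (containsQ_permTail_of_succ hf hfi hv)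
  · exact h.elim (containsQ_of_sub_one_le_apply_zero π) containsQ_of_containsQ_permTail

lemma card_avoidQ_succ {k n : ℕ} (hn : k ≤ n + 2) :
    Nat.card {π : Equiv.Perm (Fin (n + 1)) // ¬ ContainsQ k (n + 1) π}
      = (k - 1) * Nat.card {σ : Equiv.Perm (Fin n) // ¬ ContainsQ k n σ} := by
  have hhead : Nat.card {a : Fin (n + 1) // (a : ℕ) < k - 1} = k - 1 := by
    rw [Nat.card_eq_fintype_card, Fintype.card_subtype, Fin.card_filter_val_lt]
    omega
  rw [← hhead, ← Nat.card_prod, ← Nat.card_congr (Equiv.subtypeProdEquivProd ..)]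
  exact Nat.card_congr <| (permHeadTailEquiv n).subtypeEquiv fun π ↦ by
    rw [containsQ_succ_iff, not_or, Nat.not_le]
    rfl

lemma card_avoidQ_sub_one_add (k m : ℕ) :
    Nat.card {π : Equiv.Perm (Fin (k - 1 + m)) // ¬ ContainsQ k (k - 1 + m) π}
      = (k - 1).factorial * (k - 1) ^ m := by
  induction m with
  | zero =>
    rw [Nat.add_zero, Nat.card_congr (Equiv.subtypeUnivEquiv (not_containsQ_of_le le_rfl)), Nat.card_perm]
    simp
  | succ m ih =>
    rw [← Nat.add_assoc, card_avoidQ_succ (by omega), ih, pow_succ]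
    ring

theorem stmt_0 (n k : ℕ) (hk : 2 ≤ k) (hkn : k ≤ n) :
    Nat.card {π : Equiv.Perm (Fin n) // ¬ ContainsQ k n π} =
      Nat.factorial (k - 1) * (k - 1) ^ (n - k + 1) := by
  obtain ⟨m, rfl⟩ : ∃ m, n = k - 1 + m := ⟨n - (k - 1), by omega⟩
  rw [card_avoidQ_sub_one_add, show k - 1 + m - k + 1 = m by omega]
end

section
/- A permutation π of [n] avoids the POP Q_k if and only if for every value t with k ≤ t ≤ n, the position of t in π is at least t - k + 2; equivalently, π(j) ≥ j - k + 2 fails for no position, i.e. every position j satisfies that the value placed there, say i = π(j), satisfies i ≥ j - k + 2. -/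

private lemma card_Iio' {n : ℕ} (i : Fin n) : (Finset.Iio i).card = (i : ℕ) := by
  cases n with
  | zero => exact i.elim0
  | succ m => simp

private lemma card_Iic' {n : ℕ} (i : Fin n) : (Finset.Iic i).card = (i : ℕ) + 1 := by
  cases n with
  | zero => exact i.elim0
  | succ m => simp

/-- `π` avoids `Q_k` iff each position `i` (1-based: `i+1`) carries a value
`π i` (1-based: `π i + 1`) with `value ≥ position - k + 2` failing never, i.e.
`π i + 1 ≥ (i + 1) - k + 2`, written additively as `π i + 2 ≤ i + k`
(positions/values 1-based: `i ≥ j - k + 2` for `j = π(i)`). -/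
theorem stmt_1 (n k : ℕ) (hk : 2 ≤ k) (π : Equiv.Perm (Fin n)) :
    ¬ ContainsQ k n π ↔ ∀ i : Fin n, (π i : ℕ) + 2 ≤ (i : ℕ) + k := by
  constructor
  · -- avoid → bound; contrapositive: violation → contains
    intro h i
    by_contra hc
    push_neg at hc
    apply h
    set T : Finset (Fin n) := Finset.univ.filter (fun j => i < j ∧ π j < π i) with hT
    have hA : (Finset.Iio (π i)).card ≤
        (Finset.univ.filter (fun j => π j < π i)).card := by
      apply Finset.card_le_card_of_injOn (fun v => π.symm v)
      · intro v hv
        simp only [Finset.mem_filter, Finset.mem_univ, true_and,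
          Equiv.apply_symm_apply]
        simpa using Finset.mem_Iio.mp hv
      · intro a _ b _ hab
        exact π.symm.injective hab
    have hsub : (Finset.univ.filter (fun j => π j < π i)) ⊆ T ∪ Finset.Iio i := by
      intro j hj
      simp only [Finset.mem_filter, Finset.mem_univ, true_and] at hj
      rcases lt_trichotomy i j with h1 | h1 | h1
      · exact Finset.mem_union_left _ (by simp [hT, h1, hj])
      · exact absurd (h1 ▸ hj) (lt_irrefl _)
      · exact Finset.mem_union_right _ (Finset.mem_Iio.mpr h1)
    have hcT : k - 1 ≤ T.card := by
      have h1 := Finset.card_le_card hsub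
      have h2 := Finset.card_union_le T (Finset.Iio i)
      have hIio : (Finset.Iio i).card = (i : ℕ) := card_Iio' i
      have hIv : (Finset.Iio (π i)).card = (π i : ℕ) := card_Iio' (π i)
      omega
    obtain ⟨s, hsT, hs⟩ := Finset.exists_subset_card_eq hcT
    refine ⟨i, s.orderEmbOfFin hs, (s.orderEmbOfFin hs).strictMono, ?_, ?_⟩ <;>
      intro j <;>
      · have hmem := hsT (s.orderEmbOfFin_mem hs j)
        simp only [hT, Finset.mem_filter, Finset.mem_univ, true_and] at hmem
        first
          | exact hmem.1
          | exact hmem.2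
  · rintro hB ⟨i, f, hmono, hgt, hlt⟩
    -- take the position of the max value among positions ≤ i
    obtain ⟨i', hi'mem, hi'max⟩ :=
      Finset.exists_max_image (Finset.Iic i) (fun j => π j) ⟨i, Finset.mem_Iic.mpr le_rfl⟩
    have hi' : i' ≤ i := Finset.mem_Iic.mp hi'mem
    set A : Finset (Fin n) := Finset.univ.filter (fun j => π j < π i') with hA
    have hAcard : A.card ≤ (π i' : ℕ) := by
      have : A.card ≤ (Finset.Iio (π i')).card := by
        apply Finset.card_le_card_of_injOn (fun j => π j)
        · intro j hj
          simp only [hA, Finset.mem_filter, Finset.mem_univ, true_and] at hj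
          simpa using hj
        · intro a _ b _ hab
          exact π.injective hab
      simpa [card_Iio' (π i')] using this
    set S1 : Finset (Fin n) := (Finset.Iic i).erase i' with hS1
    set S2 : Finset (Fin n) := Finset.univ.image f with hS2
    have hS1card : S1.card = (i : ℕ) := by
      rw [hS1, Finset.card_erase_of_mem hi'mem, card_Iic' i]
      omega
    have hS2card : S2.card = k - 1 := by
      rw [hS2, Finset.card_image_of_injective _ hmono.injective, Finset.card_univ,
        Fintype.card_fin]
    have hdisj : Disjoint S1 S2 := by
      rw [Finset.disjoint_left]
      intro a ha1 ha2
      simp only [hS1, Finset.mem_erase, Finset.mem_Iic] at ha1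
      simp only [hS2, Finset.mem_image, Finset.mem_univ, true_and] at ha2
      obtain ⟨j, rfl⟩ := ha2
      exact absurd ha1.2 (not_le.mpr (hgt j))
    have hS1A : S1 ⊆ A := by
      intro a ha
      simp only [hS1, Finset.mem_erase, Finset.mem_Iic] at ha
      simp only [hA, Finset.mem_filter, Finset.mem_univ, true_and]
      have hle := hi'max a (Finset.mem_Iic.mpr ha.2)
      exact lt_of_le_of_ne hle fun hEq => ha.1 (π.injective hEq)
    have hS2A : S2 ⊆ A := by
      intro a ha
      simp only [hS2, Finset.mem_image, Finset.mem_univ, true_and] at ha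
      obtain ⟨j, rfl⟩ := ha
      simp only [hA, Finset.mem_filter, Finset.mem_univ, true_and]
      exact lt_of_lt_of_le (hlt j) (hi'max i (Finset.mem_Iic.mpr le_rfl))
    have hcard : (i : ℕ) + (k - 1) ≤ A.card := by
      have := Finset.card_le_card (Finset.union_subset hS1A hS2A)
      rw [Finset.card_union_of_disjoint hdisj, hS1card, hS2card] at this
      exact this
    have hB' := hB i'
    have : (i' : ℕ) ≤ (i : ℕ) := hi'
    omega
end

section
/- The number of permutations of [3n] that avoid the patterns 231, 312 and 321 and satisfy π(3i+1) < π(3i+2) and π(3i+1) < π(3i+3) for all 0 ≤ i ≤ n-1 equals 2 · 3^{n-1}. -/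
/-!
Avoiding 231, 312 and 321 means exactly that `π j < π k` whenever `j + 2 ≤ k`; by counting the
values below `π j`, this is equivalent to `|π j - j| ≤ 1`. Such a permutation is a product of
disjoint adjacent transpositions `(j j+1)`, determined by the set of `j` with `π j = j + 1`.
The heap condition forbids the transposition `(3i 3i+1)`, so every block `{3i, 3i+1, 3i+2}`
independently either is fixed, swaps `3i+1 ↔ 3i+2`, or swaps `3i+2 ↔ 3i+3`; the last block lacks
the third option, giving `2 · 3 ^ (n - 1)` permutations.
-/

/-- `π` contains the pattern `p` (given 0-based, as a function `Fin m → Fin m`)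
iff some subsequence of `π` is order-isomorphic to `p`. -/
def ContainsPat {m n : ℕ} (p : Fin m → Fin m) (π : Equiv.Perm (Fin n)) : Prop :=
  ∃ f : Fin m → Fin n, StrictMono f ∧ ∀ a b : Fin m, p a < p b ↔ π (f a) < π (f b)

/-- 2-ary shrub forests of `n` heaps avoiding 231, 312, 321: permutations of
`[3n]` avoiding the patterns 231, 312, 321 and satisfying (1-based)
`π(3i+1) < π(3i+2)` and `π(3i+1) < π(3i+3)` for all `0 ≤ i ≤ n-1`. -/
def InShrub (n : ℕ) (π : Equiv.Perm (Fin (3 * n))) : Prop :=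
  (¬ ContainsPat ![1, 2, 0] π) ∧ (¬ ContainsPat ![2, 0, 1] π) ∧
  (¬ ContainsPat ![2, 1, 0] π) ∧
  ∀ (i : ℕ) (h : 3 * i + 2 < 3 * n),
    π ⟨3 * i, by omega⟩ < π ⟨3 * i + 1, by omega⟩ ∧
    π ⟨3 * i, by omega⟩ < π ⟨3 * i + 2, h⟩

open Finset

namespace Equiv.Perm

variable {N : ℕ} {π σ : Perm (Fin N)}

def MovesAtMostOne (π : Perm (Fin N)) : Prop :=
  ∀ j : Fin N, (π j : ℕ) ≤ j + 1 ∧ (j : ℕ) ≤ π j + 1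

/-- `π j ≤ j + 1 ≤ k - 1 ≤ π k`, and equality throughout would force `π j = π k`. -/
lemma MovesAtMostOne.apply_lt_apply (h : MovesAtMostOne π) {j k : Fin N}
    (hjk : (j : ℕ) + 2 ≤ k) : π j < π k := by
  have hne : (π j : ℕ) ≠ π k := fun e => by
    have := congrArg Fin.val (π.injective (Fin.ext e))
    omega
  have := h j
  have := h k
  rw [Fin.lt_def]
  omega

lemma card_filter_apply_lt (π : Perm (Fin N)) (v : Fin N) : #{i | π i < v} = v := by
  rw [← Fin.card_Iio v]
  exact card_equiv π (by simp)

/-- The positions carrying values below `π j` lie in `[0, j + 2) \ {j}` and include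
`[0, j - 1)`. -/
lemma movesAtMostOne_of_forall_apply_lt (h : ∀ j k : Fin N, (j : ℕ) + 2 ≤ k → π j < π k) :
    MovesAtMostOne π := by
  intro j
  have hsub : ({i | π i < π j} : Finset (Fin N)).map Fin.valEmbedding ⊆
      (range (j + 2)).erase j := by
    intro m hm
    simp only [mem_map, mem_filter, mem_univ, true_and, Fin.valEmbedding_apply] at hm
    obtain ⟨i, hi, rfl⟩ := hm
    have hij : i ≠ j := by rintro rfl; exact lt_irrefl _ hi
    have : (i : ℕ) < j + 2 := by
      by_contra! hge
      exact lt_asymm hi (h j i hge)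
    simp [Fin.val_ne_iff.2 hij, this]
  have hsup : range (j - 1) ⊆ ({i | π i < π j} : Finset (Fin N)).map Fin.valEmbedding := by
    intro m hm
    rw [mem_range] at hm
    simp only [mem_map, mem_filter, mem_univ, true_and, Fin.valEmbedding_apply]
    exact ⟨⟨m, by omega⟩, h _ _ (by simp; omega), rfl⟩
  have h₁ := card_le_card hsub
  have h₂ := card_le_card hsup
  rw [card_map, card_filter_apply_lt, card_erase_of_mem (by simp), card_range] at h₁
  rw [card_map, card_filter_apply_lt, card_range] at h₂
  omega

lemma containsPat_of_apply_lt {j k : Fin N} (hjk : (j : ℕ) + 2 ≤ k) (hπ : π k < π j) :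
    ContainsPat ![1, 2, 0] π ∨ ContainsPat ![2, 0, 1] π ∨ ContainsPat ![2, 1, 0] π := by
  set m : Fin N := ⟨j + 1, by omega⟩
  have hf : StrictMono ![j, m, k] := by
    refine Fin.strictMono_iff_lt_succ.2 fun i => ?_
    fin_cases i <;> simp [m, Fin.lt_def]; omega
  have hjm : π j ≠ π m := π.injective.ne (by simp [m, Fin.ext_iff])
  have hmk : π m ≠ π k := π.injective.ne (by simp [m, Fin.ext_iff]; omega)
  have realizes {p : Fin 3 → Fin 3}
      (hp : ∀ a b, p a < p b ↔ π (![j, m, k] a) < π (![j, m, k] b)) : ContainsPat p π :=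
    ⟨_, hf, hp⟩
  rcases lt_or_gt_of_ne hmk with hmk | hkm
  · exact .inr <| .inl <| realizes fun a b => by
      fin_cases a <;> fin_cases b <;> simp <;> omega
  rcases lt_or_gt_of_ne hjm with hjm | hmj
  · exact .inl <| realizes fun a b => by
      fin_cases a <;> fin_cases b <;> simp <;> omega
  · exact .inr <| .inr <| realizes fun a b => by
      fin_cases a <;> fin_cases b <;> simp <;> omega

lemma not_containsPat (h : MovesAtMostOne π) {p : Fin 3 → Fin 3} (hp : p 2 < p 0) :
    ¬ ContainsPat p π := by
  rintro ⟨f, hf, hfp⟩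
  have h02 : (f 0 : ℕ) + 2 ≤ f 2 := by
    have h01 : f 0 < f 1 := hf (by decide)
    have h12 : f 1 < f 2 := hf (by decide)
    rw [Fin.lt_def] at h01 h12
    omega
  exact lt_asymm ((hfp 2 0).1 hp) (h.apply_lt_apply h02)

lemma avoids_iff_movesAtMostOne :
    (¬ ContainsPat ![1, 2, 0] π ∧ ¬ ContainsPat ![2, 0, 1] π ∧
      ¬ ContainsPat ![2, 1, 0] π) ↔ MovesAtMostOne π := by
  refine ⟨fun ⟨h₁, h₂, h₃⟩ => movesAtMostOne_of_forall_apply_lt fun j k hjk => ?_,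
    fun h => ⟨not_containsPat h (by decide), not_containsPat h (by decide),
      not_containsPat h (by decide)⟩⟩
  by_contra! hkj
  have hne : π k ≠ π j := π.injective.ne fun e => by rw [e] at hjk; omega
  rcases containsPat_of_apply_lt hjk (hkj.lt_of_ne hne) with h | h | h
  exacts [h₁ h, h₂ h, h₃ h]

lemma MovesAtMostOne.symm (h : MovesAtMostOne π) : MovesAtMostOne π.symm := fun j => by
  have := h (π.symm j)
  rw [apply_symm_apply] at this
  omega

/-- The preimage of `a` is `a + 1` or `a - 1`; in the latter case induction at `a - 1` would give
`π a = a - 1`. -/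
lemma MovesAtMostOne.apply_succ_eq (h : MovesAtMostOne π) {a b : Fin N} (hab : (a : ℕ) + 1 = b)
    (hπ : π a = b) : π b = a := by
  obtain ⟨k, hk⟩ : ∃ k, (a : ℕ) = k := ⟨_, rfl⟩
  induction k using Nat.strong_induction_on generalizing a b with
  | _ k ih =>
    set c := π.symm a
    have hπc : π c = a := π.apply_symm_apply a
    have hc : c ≠ a := fun e => by rw [e, hπ] at hπc; rw [← hπc] at hab; omega
    have := h c
    rw [hπc] at this
    rcases (by omega : (c : ℕ) + 1 = a ∨ (c : ℕ) = b) with hca | hcb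
    · have := ih c (by omega) hca hπc rfl
      rw [hπ] at this
      omega
    · rw [← Fin.ext hcb, hπc]

lemma MovesAtMostOne.apply_eq_iff (h : MovesAtMostOne π) {a b : Fin N} (hab : (a : ℕ) + 1 = b) :
    π a = b ↔ π b = a :=
  ⟨h.apply_succ_eq hab, fun hπ => by
    have := h.symm.apply_succ_eq hab (π.symm_apply_eq.2 hπ.symm)
    rwa [π.symm_apply_eq, eq_comm] at this⟩

def upSteps (π : Perm (Fin N)) : Set ℕ :=
  {j | ∃ a : Fin N, (a : ℕ) = j ∧ (π a : ℕ) = j + 1}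

lemma val_mem_upSteps {a : Fin N} : (a : ℕ) ∈ upSteps π ↔ (π a : ℕ) = a + 1 :=
  ⟨fun ⟨b, hb, hπ⟩ => by obtain rfl := Fin.ext hb; exact hπ, fun hπ => ⟨a, rfl, hπ⟩⟩

lemma succ_lt_of_mem_upSteps {j : ℕ} (hj : j ∈ upSteps π) : j + 1 < N := by
  obtain ⟨a, rfl, hπ⟩ := hj
  rw [← hπ]
  exact (π a).2

lemma MovesAtMostOne.succ_notMem_upSteps (h : MovesAtMostOne π) {j : ℕ} (hj : j ∈ upSteps π) :
    j + 1 ∉ upSteps π := by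
  rintro ⟨b, hb, hπb⟩
  obtain ⟨a, rfl, hπa⟩ := hj
  have := h.apply_succ_eq hb.symm (Fin.ext (by omega))
  omega

lemma MovesAtMostOne.apply_lt_apply_succ_iff (h : MovesAtMostOne π) {a b : Fin N}
    (hab : (a : ℕ) + 1 = b) : π a < π b ↔ (a : ℕ) ∉ upSteps π := by
  rw [val_mem_upSteps, Fin.lt_def]
  constructor
  · intro hlt hπa
    have := h.apply_succ_eq hab (Fin.ext (by omega))
    omega
  · intro hπa
    have hne : (π a : ℕ) ≠ π b := fun e => by
      have := congrArg Fin.val (π.injective (Fin.ext e))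
      omega
    have := h a
    have := h b
    omega

open Classical in
noncomputable def adjSwap (D : Set ℕ) (j : ℕ) : ℕ :=
  if j ∈ D then j + 1 else if j ≠ 0 ∧ j - 1 ∈ D then j - 1 else j

section adjSwap

variable {D : Set ℕ}

lemma adjSwap_adjSwap (hD : ∀ j ∈ D, j + 1 ∉ D) (j : ℕ) : adjSwap D (adjSwap D j) = j := by
  by_cases hj : j ∈ D
  · simp [adjSwap, hj, hD j hj]
  by_cases hj' : j ≠ 0 ∧ j - 1 ∈ D
  · simp [adjSwap, hj, hj', Nat.sub_add_cancel (Nat.one_le_iff_ne_zero.2 hj'.1)]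
  · simp [adjSwap, hj, hj']

lemma adjSwap_lt (hN : ∀ j ∈ D, j + 1 < N) {j : ℕ} (hj : j < N) : adjSwap D j < N := by
  unfold adjSwap
  split_ifs with h
  exacts [hN j h, by omega, hj]

lemma adjSwap_eq_succ_iff {j : ℕ} : adjSwap D j = j + 1 ↔ j ∈ D := by
  unfold adjSwap
  split_ifs <;> simp_all

noncomputable def adjSwapPerm (D : Set ℕ) (hD : ∀ j ∈ D, j + 1 ∉ D)
    (hN : ∀ j ∈ D, j + 1 < N) : Perm (Fin N) :=
  Function.Involutive.toPerm (fun j => ⟨adjSwap D j, adjSwap_lt hN j.2⟩)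
    fun j => Fin.ext (adjSwap_adjSwap hD j)

variable (hD : ∀ j ∈ D, j + 1 ∉ D) (hN : ∀ j ∈ D, j + 1 < N)

lemma adjSwapPerm_movesAtMostOne : MovesAtMostOne (adjSwapPerm D hD hN) := fun j => by
  change adjSwap D j ≤ j + 1 ∧ j ≤ adjSwap D j + 1
  unfold adjSwap
  split_ifs <;> omega

lemma upSteps_adjSwapPerm : upSteps (adjSwapPerm D hD hN) = D := by
  ext j
  refine ⟨fun ⟨a, ha, hπa⟩ => ?_, fun hj => ?_⟩
  · subst ha
    exact adjSwap_eq_succ_iff.1 hπa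
  · exact ⟨⟨j, (hN j hj).trans' (by omega)⟩, rfl, adjSwap_eq_succ_iff.2 hj⟩

end adjSwap

lemma MovesAtMostOne.apply_eq_adjSwap (h : MovesAtMostOne π) (j : Fin N) :
    (π j : ℕ) = adjSwap (upSteps π) j := by
  unfold adjSwap
  split_ifs with hup hdown
  · exact val_mem_upSteps.1 hup
  · obtain ⟨hj, a, ha, hπa⟩ := hdown
    rw [h.apply_succ_eq (a := a) (b := j) (by omega) (Fin.ext (by omega)), ha]
  · have hj := h j
    have hsucc : (π j : ℕ) ≠ j + 1 := fun e => hup (val_mem_upSteps.2 e)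
    have hpred : (π j : ℕ) + 1 ≠ j := fun e => by
      refine hdown ⟨by omega, π j, by omega, ?_⟩
      show _ = _
      rw [(h.apply_eq_iff e).2 rfl]
      omega
    omega

lemma MovesAtMostOne.eq_of_upSteps_eq (hπ : MovesAtMostOne π) (hσ : MovesAtMostOne σ)
    (hup : upSteps π = upSteps σ) : π = σ :=
  Equiv.ext fun j => Fin.ext <| by rw [hπ.apply_eq_adjSwap, hσ.apply_eq_adjSwap, hup]

end Equiv.Perm

open Equiv.Perm

lemma Fintype.card_subtype_apply_ne {α β : Type*} [Fintype α] [DecidableEq α] [Fintype β]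
    [DecidableEq β] (a : α) (b : β) :
    card {c : α → β // c a ≠ b} = (card β - 1) * card β ^ (card α - 1) := by
  let e : {c : α → β // c a ≠ b} ≃ {x : β // x ≠ b} × ({i // i ≠ a} → β) :=
    ((Equiv.funSplitAt a β).subtypeEquiv fun _ => Iff.rfl).trans
      (Equiv.prodSubtypeFstEquivSubtypeProd (p := (· ≠ b)))
  simp [Fintype.card_congr e, Fintype.card_subtype_compl]

namespace ShrubForest

variable {n : ℕ}

/-- Block `i` occupies the positions `3i, 3i+1, 3i+2`; `c i = 1` swaps `3i+1 ↔ 3i+2` and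
`c i = 2` swaps `3i+2 ↔ 3i+3`. -/
def blockSwaps (c : Fin n → Fin 3) : Set ℕ :=
  {j | ∃ i : Fin n, (j = 3 * i + 1 ∧ c i = 1) ∨ (j = 3 * i + 2 ∧ c i = 2)}

lemma three_mul_notMem_blockSwaps (c : Fin n → Fin 3) (m : ℕ) : 3 * m ∉ blockSwaps c := by
  rintro ⟨i, ⟨h, -⟩ | ⟨h, -⟩⟩ <;> omega

lemma three_mul_add_one_mem_blockSwaps (c : Fin n → Fin 3) (i : Fin n) :
    3 * (i : ℕ) + 1 ∈ blockSwaps c ↔ c i = 1 := by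
  refine ⟨?_, fun h => ⟨i, .inl ⟨rfl, h⟩⟩⟩
  rintro ⟨i', ⟨h, hc⟩ | ⟨h, -⟩⟩
  · rwa [Fin.ext (by omega : (i : ℕ) = i')]
  · omega

lemma three_mul_add_two_mem_blockSwaps (c : Fin n → Fin 3) (i : Fin n) :
    3 * (i : ℕ) + 2 ∈ blockSwaps c ↔ c i = 2 := by
  refine ⟨?_, fun h => ⟨i, .inr ⟨rfl, h⟩⟩⟩
  rintro ⟨i', ⟨h, -⟩ | ⟨h, hc⟩⟩
  · omega
  · rwa [Fin.ext (by omega : (i : ℕ) = i')]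

lemma succ_notMem_blockSwaps (c : Fin n → Fin 3) :
    ∀ j ∈ blockSwaps c, j + 1 ∉ blockSwaps c := by
  rintro j ⟨i, ⟨rfl, h₁⟩ | ⟨rfl, -⟩⟩ ⟨i', ⟨h, -⟩ | ⟨h, h₂⟩⟩
  all_goals try omega
  rw [Fin.ext (by omega : (i' : ℕ) = i), h₁] at h₂
  exact absurd h₂ (by decide)

lemma succ_lt_of_mem_blockSwaps {c : Fin n → Fin 3} (hc : ∀ i, c i = 2 → (i : ℕ) + 1 < n) :
    ∀ j ∈ blockSwaps c, j + 1 < 3 * n := by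
  rintro j ⟨i, ⟨rfl, -⟩ | ⟨rfl, h⟩⟩
  · omega
  · have := hc i h
    omega

abbrev BlockChoice (n : ℕ) : Type := {c : Fin n → Fin 3 // ∀ i, c i = 2 → (i : ℕ) + 1 < n}

noncomputable def shrubOf (c : BlockChoice n) : Equiv.Perm (Fin (3 * n)) :=
  adjSwapPerm (blockSwaps c.1) (succ_notMem_blockSwaps c.1) (succ_lt_of_mem_blockSwaps c.2)

lemma upSteps_shrubOf (c : BlockChoice n) : upSteps (shrubOf c) = blockSwaps c.1 :=
  upSteps_adjSwapPerm _ _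

lemma shrubOf_injective : Function.Injective (shrubOf (n := n)) := by
  intro c c' h
  have hup := congrArg upSteps h
  rw [upSteps_shrubOf, upSteps_shrubOf] at hup
  ext1; funext i
  have h₁ := three_mul_add_one_mem_blockSwaps c.1 i
  have h₂ := three_mul_add_two_mem_blockSwaps c.1 i
  rw [hup, three_mul_add_one_mem_blockSwaps] at h₁
  rw [hup, three_mul_add_two_mem_blockSwaps] at h₂
  have fin_three_eq : ∀ x y : Fin 3, (x = 1 ↔ y = 1) → (x = 2 ↔ y = 2) → x = y := by
    decide
  exact fin_three_eq _ _ h₁.symm h₂.symm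

lemma inShrub_iff {π : Equiv.Perm (Fin (3 * n))} :
    InShrub n π ↔ MovesAtMostOne π ∧ ∀ m, 3 * m ∉ upSteps π := by
  constructor
  · rintro ⟨h₁, h₂, h₃, hheap⟩
    have hM := avoids_iff_movesAtMostOne.1 ⟨h₁, h₂, h₃⟩
    refine ⟨hM, fun m hm => ?_⟩
    have := succ_lt_of_mem_upSteps hm
    exact (hM.apply_lt_apply_succ_iff rfl).1 (hheap m (by omega)).1 hm
  · rintro ⟨hM, h₀⟩
    obtain ⟨h₁, h₂, h₃⟩ := avoids_iff_movesAtMostOne.2 hM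
    exact ⟨h₁, h₂, h₃, fun m _ =>
      ⟨(hM.apply_lt_apply_succ_iff rfl).2 (h₀ m), hM.apply_lt_apply le_rfl⟩⟩

lemma inShrub_shrubOf (c : BlockChoice n) : InShrub n (shrubOf c) :=
  inShrub_iff.2 ⟨adjSwapPerm_movesAtMostOne _ _, fun m => by
    rw [upSteps_shrubOf]
    exact three_mul_notMem_blockSwaps _ m⟩

open Classical in
noncomputable def blockChoice (π : Equiv.Perm (Fin (3 * n))) : BlockChoice n :=
  ⟨fun i => if 3 * (i : ℕ) + 1 ∈ upSteps π then 1
      else if 3 * (i : ℕ) + 2 ∈ upSteps π then 2 else 0,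
    fun i hi => by
      dsimp only at hi
      split_ifs at hi with h₁ h₂ <;> try exact absurd hi (by decide)
      have := succ_lt_of_mem_upSteps h₂
      omega⟩

section blockChoice

variable {π : Equiv.Perm (Fin (3 * n))} {i : Fin n}

lemma blockChoice_eq_one_iff : (blockChoice π).1 i = 1 ↔ 3 * (i : ℕ) + 1 ∈ upSteps π := by
  simp only [blockChoice]
  split_ifs <;> simp_all

lemma blockChoice_eq_two_iff :
    (blockChoice π).1 i = 2 ↔
      3 * (i : ℕ) + 1 ∉ upSteps π ∧ 3 * (i : ℕ) + 2 ∈ upSteps π := by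
  simp only [blockChoice]
  split_ifs <;> simp_all

lemma upSteps_eq_blockSwaps_blockChoice (h : InShrub n π) :
    upSteps π = blockSwaps (blockChoice π).1 := by
  obtain ⟨hM, h₀⟩ := inShrub_iff.1 h
  ext j
  constructor
  · intro hj
    have := succ_lt_of_mem_upSteps hj
    let i : Fin n := ⟨j / 3, by omega⟩
    obtain hj₀ | hj₁ | hj₂ : j = 3 * i ∨ j = 3 * i + 1 ∨ j = 3 * i + 2 := by
      simp only [i]
      omega
    · exact absurd (hj₀ ▸ hj) (h₀ i)
    · exact ⟨i, .inl ⟨hj₁, blockChoice_eq_one_iff.2 (hj₁ ▸ hj)⟩⟩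
    · refine ⟨i, .inr ⟨hj₂, blockChoice_eq_two_iff.2 ⟨fun h₁ => ?_, hj₂ ▸ hj⟩⟩⟩
      exact hM.succ_notMem_upSteps h₁ (hj₂ ▸ hj)
  · rintro ⟨i, ⟨rfl, h₁⟩ | ⟨rfl, h₂⟩⟩
    exacts [blockChoice_eq_one_iff.1 h₁, (blockChoice_eq_two_iff.1 h₂).2]

lemma shrubOf_blockChoice (h : InShrub n π) : shrubOf (blockChoice π) = π :=
  (inShrub_iff.1 (inShrub_shrubOf _)).1.eq_of_upSteps_eq (inShrub_iff.1 h).1 <| by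
    rw [upSteps_shrubOf, upSteps_eq_blockSwaps_blockChoice h]

end blockChoice

noncomputable def shrubEquiv (n : ℕ) : BlockChoice n ≃ {π // InShrub n π} :=
  Equiv.ofBijective (fun c => ⟨shrubOf c, inShrub_shrubOf c⟩)
    ⟨fun _ _ h => shrubOf_injective (congrArg Subtype.val h),
      fun π => ⟨blockChoice π.1, Subtype.ext (shrubOf_blockChoice π.2)⟩⟩

lemma card_blockChoice (hn : 1 ≤ n) : Fintype.card (BlockChoice n) = 2 * 3 ^ (n - 1) := by
  let last : Fin n := ⟨n - 1, by omega⟩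
  have hlast (c : Fin n → Fin 3) : (∀ i, c i = 2 → (i : ℕ) + 1 < n) ↔ c last ≠ 2 := by
    refine ⟨fun hc h => absurd (hc last h) (by simp [last]; omega), fun hc i h => ?_⟩
    by_contra hi
    have : last = i := Fin.ext (by simp [last]; omega)
    exact hc (this ▸ h)
  rw [Fintype.card_congr (Equiv.subtypeEquivRight hlast), Fintype.card_subtype_apply_ne]
  simp

end ShrubForest

open ShrubForest in
theorem stmt_5 (n : ℕ) (hn : 1 ≤ n) :
    Nat.card {π : Equiv.Perm (Fin (3 * n)) // InShrub n π} = 2 * 3 ^ (n - 1) := by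
  rw [← Nat.card_congr (shrubEquiv n), Nat.card_eq_fintype_card, card_blockChoice hn]
end

section
/- For every n ≥ 2, the set of 3n-permutations avoiding {231, 312, 321} with π(3i+1) < π(3i+2), π(3i+1) < π(3i+3) for all i equals the set of permutations of the form 1 ⊕ τ ⊕ π'_{[2,3n-3]} where τ ∈ {123, 132, 213} and π' ranges over the corresponding set of (3n-3)-permutations (with π'_{[2,3n-3]} denoting the factor of π' from position 2 onward); for n = 1 the set equals {123, 132}. -/
open Equiv

def FarIncreasing {N : ℕ} (π : Perm (Fin N)) : Prop :=
  ∀ i k : Fin N, (i : ℕ) + 2 ≤ k → π i < π k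

def BlocksStartWithMin (n : ℕ) (π : Perm (Fin (3 * n))) : Prop :=
  ∀ (i : ℕ) (h : 3 * i + 2 < 3 * n),
    π ⟨3 * i, by omega⟩ < π ⟨3 * i + 1, by omega⟩ ∧ π ⟨3 * i, by omega⟩ < π ⟨3 * i + 2, h⟩

section Permutations

variable {N : ℕ}

theorem Equiv.Perm.val_apply_pos {π : Perm (Fin N)} {z : Fin N} (hz : (π z : ℕ) = 0)
    {k : Fin N} (hk : (k : ℕ) ≠ z) : 0 < (π k : ℕ) :=
  Nat.pos_of_ne_zero fun h => hk (congrArg Fin.val (π.injective (Fin.ext (h.trans hz.symm))))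

theorem exists_perm_val_eq (g : Fin N → ℕ) (hg : ∀ a, g a < N) (hinj : g.Injective) :
    ∃ σ : Perm (Fin N), ∀ a, (σ a : ℕ) = g a :=
  let f : Fin N → Fin N := fun a => ⟨g a, hg a⟩
  have hf : f.Injective := fun _ _ h => hinj (congrArg Fin.val h)
  ⟨Equiv.ofBijective f (Finite.injective_iff_bijective.mp hf), fun _ => rfl⟩

theorem Equiv.Perm.val_lt_iff_of_forall_lt {π : Perm (Fin N)} {a : ℕ}
    (h : ∀ i k : Fin N, (i : ℕ) < a → a ≤ (k : ℕ) → π i < π k) (i : Fin N) :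
    (π i : ℕ) < a ↔ (i : ℕ) < a := by
  set s : Set (Fin N) := {x | (x : ℕ) < a}
  have hmaps : Set.MapsTo π s s := by
    intro i₀ hi₀
    by_contra hout
    have hsymm : Set.MapsTo π.symm s s := fun w hw => by
      by_contra hk
      have := h i₀ (π.symm w) hi₀ (not_lt.mp hk)
      simp only [s, Set.mem_ofPred_eq, Equiv.apply_symm_apply, Fin.lt_def] at hw hout this
      omega
    obtain ⟨w, hw, rfl⟩ :=
      ((s.toFinite.injOn_iff_bijOn_of_mapsTo hsymm).mp π.symm.injective.injOn).surjOn hi₀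
    exact hout (by simpa using hw)
  have hbij := (s.toFinite.injOn_iff_bijOn_of_mapsTo hmaps).mp π.injective.injOn
  refine ⟨fun hi => ?_, fun hi => hmaps hi⟩
  obtain ⟨j, hj, hji⟩ := hbij.surjOn (show π i ∈ s from hi)
  rwa [π.injective hji] at hj

end Permutations

section Patterns

variable {N : ℕ} {π : Perm (Fin N)}

theorem containsPat_of_comp_eq {m : ℕ} {p : Fin m → Fin m} {f g : Fin m → Fin N}
    (hf : StrictMono f) (hg : StrictMono g) (hfg : ∀ a, π (f a) = g (p a)) : ContainsPat p π :=
  ⟨f, hf, fun a b => by rw [hfg, hfg, hg.lt_iff_lt]⟩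

theorem farIncreasing_of_avoids (h231 : ¬ ContainsPat ![1, 2, 0] π)
    (h312 : ¬ ContainsPat ![2, 0, 1] π) (h321 : ¬ ContainsPat ![2, 1, 0] π) :
    FarIncreasing π := by
  intro i k hik
  by_contra! hki
  let j : Fin N := ⟨i + 1, by omega⟩
  have hij : i < j := Nat.lt_succ_self _
  have hjk : j < k := show (i : ℕ) + 1 < k by omega
  have hf : StrictMono ![i, j, k] := (strictMono_vecEmpty.vecCons hjk).vecCons hij
  have hki : π k < π i := hki.lt_of_ne (π.injective.ne (hij.trans hjk).ne')
  rcases lt_or_gt_of_ne (π.injective.ne hjk.ne) with hjk | hkj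
  · refine h312 (containsPat_of_comp_eq hf
      ((strictMono_vecEmpty.vecCons hki).vecCons hjk) fun a => ?_)
    fin_cases a <;> rfl
  rcases lt_or_gt_of_ne (π.injective.ne hij.ne') with hji | hij
  · refine h321 (containsPat_of_comp_eq hf
      ((strictMono_vecEmpty.vecCons hji).vecCons hkj) fun a => ?_)
    fin_cases a <;> rfl
  · refine h231 (containsPat_of_comp_eq hf
      ((strictMono_vecEmpty.vecCons hij).vecCons hki) fun a => ?_)
    fin_cases a <;> rfl

theorem FarIncreasing.not_containsPat (hπ : FarIncreasing π) {p : Fin 3 → Fin 3}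
    (hp : p 2 < p 0) : ¬ ContainsPat p π := by
  rintro ⟨f, hf, hord⟩
  have h01 := hf (show (0 : Fin 3) < 1 by decide)
  have h12 := hf (show (1 : Fin 3) < 2 by decide)
  exact ((hord 2 0).mp hp).asymm (hπ _ _ (by omega))

theorem FarIncreasing.val_lt_iff (hπ : FarIncreasing π) {a : ℕ} (ha : a + 1 < N)
    (hlt : π ⟨a, by omega⟩ < π ⟨a + 1, ha⟩) (i : Fin N) :
    (π i : ℕ) < a + 1 ↔ (i : ℕ) < a + 1 := by
  refine Perm.val_lt_iff_of_forall_lt (fun i k hi hk => ?_) i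
  rcases (by omega : (i : ℕ) + 2 ≤ k ∨ ((i : ℕ) = a ∧ (k : ℕ) = a + 1)) with hfar | ⟨rfl, hk⟩
  · exact hπ i k hfar
  · obtain rfl : k = ⟨_, ha⟩ := Fin.ext hk
    exact hlt

end Patterns

theorem inShrub_iff {n : ℕ} {π : Perm (Fin (3 * n))} :
    InShrub n π ↔ FarIncreasing π ∧ BlocksStartWithMin n π :=
  ⟨fun ⟨h231, h312, h321, hblocks⟩ => ⟨farIncreasing_of_avoids h231 h312 h321, hblocks⟩,
    fun ⟨hfar, hblocks⟩ => ⟨hfar.not_containsPat (by decide), hfar.not_containsPat (by decide),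
      hfar.not_containsPat (by decide), hblocks⟩⟩

theorem perm_three_zero_lt_two_iff (τ : Perm (Fin 3)) :
    τ 0 < τ 2 ↔ τ = Equiv.refl (Fin 3) ∨ τ = Equiv.swap 1 2 ∨ τ = Equiv.swap 0 1 := by
  revert τ
  decide

theorem inShrub_one_iff (π : Perm (Fin (3 * 1))) :
    InShrub 1 π ↔ ((∀ i, π i = i) ∨
      ∀ i : Fin (3 * 1), (π i : ℕ) = if (i : ℕ) = 0 then 0 else if (i : ℕ) = 1 then 2 else 1) := by
  have hblocks : BlocksStartWithMin 1 π ↔ π 0 < π 1 ∧ π 0 < π 2 :=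
    ⟨fun h => h 0 (by omega), fun h i hi => by
      obtain rfl : i = 0 := by omega
      exact h⟩
  rw [inShrub_iff, hblocks, FarIncreasing]
  clear hblocks
  revert π
  decide

section InShrub

variable {n : ℕ} {π : Perm (Fin (3 * n))}

theorem InShrub.val_apply_zero (hπ : InShrub n π) (h : 0 < 3 * n) : (π ⟨0, h⟩ : ℕ) = 0 := by
  obtain ⟨hfar, hblocks⟩ := inShrub_iff.mp hπ
  have := (hfar.val_lt_iff (a := 0) (by omega) (hblocks 0 (by omega)).1 ⟨0, h⟩).mpr (by simp)
  omega

theorem InShrub.val_lt_four_iff (hπ : InShrub n π) (hn : 1 < n) (k : Fin (3 * n)) :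
    (π k : ℕ) < 4 ↔ (k : ℕ) < 4 :=
  have ⟨hfar, hblocks⟩ := inShrub_iff.mp hπ
  hfar.val_lt_iff (a := 3) (by omega) (hblocks 1 (by omega)).1 k

theorem InShrub.exists_head (hπ : InShrub n π) (hn : 1 < n) :
    ∃ τ : Perm (Fin 3), τ 0 < τ 2 ∧
      ∀ a : Fin 3, (π ⟨(a : ℕ) + 1, by have := a.isLt; omega⟩ : ℕ) = (τ a : ℕ) + 1 := by
  have hpos (a : Fin 3) : 0 < (π ⟨(a : ℕ) + 1, by have := a.isLt; omega⟩ : ℕ) :=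
    Perm.val_apply_pos (hπ.val_apply_zero (by omega)) (by simp)
  have hlt (a : Fin 3) : (π ⟨(a : ℕ) + 1, by have := a.isLt; omega⟩ : ℕ) < 4 :=
    (hπ.val_lt_four_iff hn _).mpr (by have := a.isLt; simp only; omega)
  obtain ⟨τ, hτ⟩ := exists_perm_val_eq
    (fun a : Fin 3 => (π ⟨(a : ℕ) + 1, by have := a.isLt; omega⟩ : ℕ) - 1)
    (fun a => by have := hlt a; omega) fun a b hab => by
      have := hpos a
      have := hpos b
      have hval : (⟨(a : ℕ) + 1, by have := a.isLt; omega⟩ : Fin (3 * n)) =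
          ⟨(b : ℕ) + 1, by have := b.isLt; omega⟩ :=
        π.injective (Fin.ext (by simp only at hab; omega))
      simpa [Fin.ext_iff] using hval
  refine ⟨τ, ?_, fun a => by have := hpos a; rw [hτ]; omega⟩
  have h13 : π ⟨1, by omega⟩ < π ⟨3, by omega⟩ := (inShrub_iff.mp hπ).1 _ _ (by simp)
  have h1 : 0 < (π ⟨1, by omega⟩ : ℕ) := hpos 0
  have e0 : (τ 0 : ℕ) = π ⟨1, by omega⟩ - 1 := hτ 0
  have e2 : (τ 2 : ℕ) = π ⟨3, by omega⟩ - 1 := hτ 2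
  rw [Fin.lt_def] at h13 ⊢
  omega

end InShrub

section Split

variable {M N : ℕ} {π : Perm (Fin M)} {π' : Perm (Fin N)} {τ : Perm (Fin 3)}

theorem exists_perm_tail (hM : M = N + 3) (hN : 0 < N)
    (h4 : ∀ k : Fin M, 4 ≤ (k : ℕ) → 4 ≤ (π k : ℕ)) :
    ∃ π' : Perm (Fin N), (π' ⟨0, hN⟩ : ℕ) = 0 ∧
      ∀ (j : ℕ), 1 ≤ j → ∀ (hj : j < N), (π ⟨j + 3, by omega⟩ : ℕ) = π' ⟨j, hj⟩ + 3 := by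
  have hval (j : Fin N) (hj : (j : ℕ) ≠ 0) : 4 ≤ (π ⟨j + 3, by omega⟩ : ℕ) :=
    h4 _ (by simp only; omega)
  obtain ⟨π', hπ'⟩ := exists_perm_val_eq
    (fun j : Fin N => if (j : ℕ) = 0 then 0 else (π ⟨j + 3, by omega⟩ : ℕ) - 3)
    (fun j => by split_ifs <;> omega) fun a b hab => by
      simp only at hab
      split_ifs at hab with ha hb hb
      · exact Fin.ext (ha.trans hb.symm)
      · have := hval b hb
        omega
      · have := hval a ha
        omega
      · have := hval a ha
        have := hval b hb
        have hπab : (⟨a + 3, by omega⟩ : Fin M) = ⟨b + 3, by omega⟩ :=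
          π.injective (Fin.ext (by omega))
        simpa [Fin.ext_iff] using hπab
  refine ⟨π', by simp [hπ'], fun j hj1 hj => ?_⟩
  have := h4 ⟨j + 3, by omega⟩ (by simpa using hj1)
  simp only [hπ', if_neg (show j ≠ 0 by omega)]
  omega

theorem val_apply_eq_of_tail (hM : M = N + 3)
    (htail : ∀ (j : ℕ), 1 ≤ j → ∀ (hj : j < N),
      (π ⟨j + 3, by omega⟩ : ℕ) = π' ⟨j, hj⟩ + 3)
    {k j : ℕ} (hk : k < M) (hj : j < N) (hkj : k = j + 3) (hj1 : 1 ≤ j) :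
    (π ⟨k, hk⟩ : ℕ) = π' ⟨j, hj⟩ + 3 := by
  subst hkj
  exact htail j hj1 hj

theorem four_le_val_apply_of_tail (hM : M = N + 3) (hN : 0 < N) (h0' : (π' ⟨0, hN⟩ : ℕ) = 0)
    (htail : ∀ (j : ℕ), 1 ≤ j → ∀ (hj : j < N),
      (π ⟨j + 3, by omega⟩ : ℕ) = π' ⟨j, hj⟩ + 3)
    (k : Fin M) (hk : 4 ≤ (k : ℕ)) : 4 ≤ (π k : ℕ) := by
  have := val_apply_eq_of_tail hM htail k.isLt (j := k - 3) (by omega) (by omega) (by omega)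
  simp only [Fin.eta] at this
  have := Perm.val_apply_pos h0' (k := ⟨k - 3, by omega⟩) (by simp only; omega)
  omega

theorem val_apply_lt_four_of_head (hM : M = N + 3) (hN : 0 < N) (h0 : (π ⟨0, by omega⟩ : ℕ) = 0)
    (hhead : ∀ a : Fin 3, (π ⟨(a : ℕ) + 1, by have := a.isLt; omega⟩ : ℕ) = (τ a : ℕ) + 1)
    (k : Fin M) (hk : (k : ℕ) < 4) : (π k : ℕ) < 4 := by
  obtain ⟨_ | k, hk'⟩ := k
  · omega
  · simp only at hk
    have : (π ⟨k + 1, hk'⟩ : ℕ) = τ ⟨k, by omega⟩ + 1 := hhead ⟨k, by omega⟩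
    have := (τ ⟨k, by omega⟩).isLt
    omega

theorem farIncreasing_iff_of_split (hM : M = N + 3) (hN : 0 < N)
    (h0 : (π ⟨0, by omega⟩ : ℕ) = 0) (hτ : τ 0 < τ 2)
    (hhead : ∀ a : Fin 3, (π ⟨(a : ℕ) + 1, by have := a.isLt; omega⟩ : ℕ) = (τ a : ℕ) + 1)
    (h0' : (π' ⟨0, hN⟩ : ℕ) = 0)
    (htail : ∀ (j : ℕ), 1 ≤ j → ∀ (hj : j < N),
      (π ⟨j + 3, by omega⟩ : ℕ) = π' ⟨j, hj⟩ + 3) :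
    FarIncreasing π ↔ FarIncreasing π' := by
  constructor
  · intro hπ i k hik
    have hk := val_apply_eq_of_tail hM htail (k := k + 3) (by omega) k.isLt rfl (by omega)
    simp only [Fin.eta] at hk
    rcases Nat.eq_zero_or_pos i with hi | hi
    · obtain rfl : i = ⟨0, hN⟩ := Fin.ext hi
      rw [Fin.lt_def, h0']
      exact Perm.val_apply_pos h0' (by simp only; omega)
    · have hi' := val_apply_eq_of_tail hM htail (k := i + 3) (by omega) i.isLt rfl hi
      simp only [Fin.eta] at hi'
      have := hπ ⟨i + 3, by omega⟩ ⟨k + 3, by omega⟩ (by simp only; omega)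
      rw [Fin.lt_def] at this ⊢
      omega
  · intro hπ' i k hik
    rw [Fin.lt_def]
    rcases (by omega : (i : ℕ) = 0 ∨ ((i : ℕ) = 1 ∧ (k : ℕ) = 3) ∨
        ((i : ℕ) < 4 ∧ 4 ≤ (k : ℕ)) ∨ 4 ≤ (i : ℕ)) with hi | ⟨hi, hk⟩ | ⟨hi, hk⟩ | hi
    · rw [show i = ⟨0, by omega⟩ from Fin.ext hi, h0]
      exact Perm.val_apply_pos h0 (by simp only; omega)
    · have h1 : (π ⟨1, by omega⟩ : ℕ) = τ 0 + 1 := hhead 0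
      have h3 : (π ⟨3, by omega⟩ : ℕ) = τ 2 + 1 := hhead 2
      rw [show i = ⟨1, by omega⟩ from Fin.ext hi, show k = ⟨3, by omega⟩ from Fin.ext hk]
      rw [Fin.lt_def] at hτ
      omega
    · have := val_apply_lt_four_of_head hM hN h0 hhead i hi
      have := four_le_val_apply_of_tail hM hN h0' htail k hk
      omega
    · have hi' := val_apply_eq_of_tail hM htail i.isLt (j := i - 3) (by omega) (by omega) (by omega)
      have hk' := val_apply_eq_of_tail hM htail k.isLt (j := k - 3) (by omega) (by omega) (by omega)
      simp only [Fin.eta] at hi' hk'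
      have := hπ' ⟨i - 3, by omega⟩ ⟨k - 3, by omega⟩ (by simp only; omega)
      rw [Fin.lt_def] at this
      omega

end Split

section SplitInShrub

variable {n : ℕ} {π : Perm (Fin (3 * n))} {π' : Perm (Fin (3 * (n - 1)))} {τ : Perm (Fin 3)}

theorem blocksStartWithMin_iff_of_split (hn : 1 < n) (h0 : (π ⟨0, by omega⟩ : ℕ) = 0)
    (hhead : ∀ a : Fin 3, (π ⟨(a : ℕ) + 1, by have := a.isLt; omega⟩ : ℕ) = (τ a : ℕ) + 1)
    (h0' : (π' ⟨0, by omega⟩ : ℕ) = 0)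
    (htail : ∀ (j : ℕ), 1 ≤ j → ∀ (hj : j < 3 * (n - 1)),
      (π ⟨j + 3, by omega⟩ : ℕ) = π' ⟨j, hj⟩ + 3) :
    BlocksStartWithMin n π ↔ BlocksStartWithMin (n - 1) π' := by
  have hM : 3 * n = 3 * (n - 1) + 3 := by omega
  have htail' (i d : ℕ) (hd : d < 3) (h : 3 * i + 2 < 3 * (n - 1)) (hi : 1 ≤ 3 * i + d) :=
    val_apply_eq_of_tail hM htail (k := 3 * (i + 1) + d) (j := 3 * i + d) (by omega) (by omega)
      (by omega) hi
  constructor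
  · intro hπ i hi
    simp only [Fin.lt_def]
    rcases Nat.eq_zero_or_pos i with rfl | hi0
    · simp only [Nat.mul_zero, Nat.zero_add]
      have h1 := Perm.val_apply_pos h0' (k := ⟨1, by omega⟩) (by simp)
      have h2 := Perm.val_apply_pos h0' (k := ⟨2, by omega⟩) (by simp)
      omega
    · have hb := hπ (i + 1) (by omega)
      simp only [Fin.lt_def] at hb
      have := htail' i 0 (by omega) hi (by omega)
      simp only [Nat.add_zero] at this
      have := htail' i 1 (by omega) hi (by omega)
      have := htail' i 2 (by omega) hi (by omega)
      omega
  · intro hπ' i hi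
    simp only [Fin.lt_def]
    rcases (by omega : i = 0 ∨ i = 1 ∨ 2 ≤ i) with rfl | rfl | hi2
    · simp only [Nat.mul_zero, Nat.zero_add]
      have h1 := Perm.val_apply_pos h0 (k := ⟨1, by omega⟩) (by simp)
      have h2 := Perm.val_apply_pos h0 (k := ⟨2, by omega⟩) (by simp)
      omega
    · simp only [Nat.mul_one, Nat.reduceAdd]
      have h3 := val_apply_lt_four_of_head hM (by omega) h0 hhead ⟨3, by omega⟩ (by simp)
      have h4 := four_le_val_apply_of_tail hM (by omega) h0' htail ⟨4, by omega⟩ (by simp)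
      have h5 := four_le_val_apply_of_tail hM (by omega) h0' htail ⟨5, by omega⟩ (by simp)
      omega
    · obtain ⟨i, rfl⟩ : ∃ i', i = i' + 1 := ⟨i - 1, by omega⟩
      have hb := hπ' i (by omega)
      simp only [Fin.lt_def] at hb
      have := htail' i 0 (by omega) (by omega) (by omega)
      simp only [Nat.add_zero] at this
      have := htail' i 1 (by omega) (by omega) (by omega)
      have := htail' i 2 (by omega) (by omega) (by omega)
      omega

theorem inShrub_iff_of_split (hn : 1 < n) (h0 : (π ⟨0, by omega⟩ : ℕ) = 0) (hτ : τ 0 < τ 2)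
    (hhead : ∀ a : Fin 3, (π ⟨(a : ℕ) + 1, by have := a.isLt; omega⟩ : ℕ) = (τ a : ℕ) + 1)
    (h0' : (π' ⟨0, by omega⟩ : ℕ) = 0)
    (htail : ∀ (j : ℕ), 1 ≤ j → ∀ (hj : j < 3 * (n - 1)),
      (π ⟨j + 3, by omega⟩ : ℕ) = π' ⟨j, hj⟩ + 3) :
    InShrub n π ↔ InShrub (n - 1) π' := by
  rw [inShrub_iff, inShrub_iff,
    farIncreasing_iff_of_split (by omega) (by omega) h0 hτ hhead h0' htail,
    blocksStartWithMin_iff_of_split hn h0 hhead h0' htail]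

end SplitInShrub

/-- For `n = 1`, `𝒫_3 = {123, 132}`; for `n ≥ 2`, `𝒫_{3n}` consists exactly of the
permutations `1 ⊕ τ ⊕ π'_{[2,3n-3]}` with `τ ∈ {123, 132, 213}` and `π' ∈ 𝒫_{3(n-1)}`
(0-based: value 0 at position 0, `τ` shifted by 1 on positions 1–3, and the factor
of `π'` from its second position onward, shifted by 3, on the remaining positions). -/
theorem stmt_6 :
    (∀ π : Equiv.Perm (Fin (3 * 1)),
      InShrub 1 π ↔ ((∀ i, π i = i) ∨
        ∀ i : Fin (3 * 1), (π i : ℕ) =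
          if (i : ℕ) = 0 then 0 else if (i : ℕ) = 1 then 2 else 1)) ∧
    ∀ n : ℕ, ∀ hn : 2 ≤ n, ∀ π : Equiv.Perm (Fin (3 * n)),
      InShrub n π ↔
        ∃ τ : Equiv.Perm (Fin 3),
          (τ = Equiv.refl (Fin 3) ∨ τ = Equiv.swap 1 2 ∨ τ = Equiv.swap 0 1) ∧
          ∃ π' : Equiv.Perm (Fin (3 * (n - 1))), InShrub (n - 1) π' ∧
            (π ⟨0, by omega⟩ : ℕ) = 0 ∧
            (∀ a : Fin 3, (π ⟨(a : ℕ) + 1, by have := a.isLt; omega⟩ : ℕ) = (τ a : ℕ) + 1) ∧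
            ∀ (j : ℕ) (hj1 : 1 ≤ j) (hj2 : j < 3 * (n - 1)),
              (π ⟨j + 3, by omega⟩ : ℕ) = (π' ⟨j, hj2⟩ : ℕ) + 3 := by
  refine ⟨inShrub_one_iff, fun n hn π => ⟨fun hπ => ?_, ?_⟩⟩
  · obtain ⟨τ, hτ, hhead⟩ := hπ.exists_head hn
    obtain ⟨π', h0', htail⟩ := exists_perm_tail (by omega : 3 * n = 3 * (n - 1) + 3) (by omega)
      fun k hk => not_lt.mp ((hπ.val_lt_four_iff hn k).not.mpr (by omega))
    have h0 := hπ.val_apply_zero (by omega)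
    exact ⟨τ, (perm_three_zero_lt_two_iff τ).mp hτ, π',
      (inShrub_iff_of_split hn h0 hτ hhead h0' htail).mp hπ, h0, hhead, htail⟩
  · rintro ⟨τ, hτ, π', hπ', h0, hhead, htail⟩
    exact (inShrub_iff_of_split hn h0 ((perm_three_zero_lt_two_iff τ).mpr hτ) hhead
      (hπ'.val_apply_zero (by omega)) htail).mpr hπ'
end

section
/- The map f sending a composition r_1 + r_2 + ... + r_k of n into ones and twos to the permutation α_1 ⊕ α_2 ⊕ ... ⊕ α_k, where α_i = 1 if r_i = 1 and α_i = 21 if r_i = 2, is a bijection from the set of compositions of n of ones and twos onto Av_n(P_3). -/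
/-!
A direct sum of blocks `1` and `21` moves every point by at most one, so for `i + 2 ≤ k` it
satisfies `π i ≤ i + 1 ≤ k - 1 ≤ π k`, which rules out `P₃`. Conversely, let `π` avoid `P₃` and
map `[0, m)` onto itself. The value `m` cannot sit at a position `k ≥ m + 2`, as then `π m > π k`;
so either `π m = m`, or `π (m + 1) = m` and, by the same argument for the value `m + 1`,
`π m = m + 1`. Hence `π` starts on `[m, n)` with a block `1` or `21`, and peeling off blocks yields
the composition. Injectivity holds because the value at the first position of a block tells `1`
from `21`.
-/

/-- `π` avoids the POP `P_3` (poset on `{1,2,3}` with `1 > 3`). -/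
def AvoidsP3 {n : ℕ} (π : Equiv.Perm (Fin n)) : Prop :=
  ¬ ∃ i j k : Fin n, i < j ∧ j < k ∧ π k < π i

/-- The permutation of length `a` assigned to a part `a` of a composition:
the identity, except that a part `2` is sent to the transposition `21`. -/
def partPerm (a : ℕ) : Equiv.Perm (Fin a) :=
  if h : a = 2 then (finCongr h.symm).permCongr (Equiv.swap 0 1) else Equiv.refl _

/-- The direct sum `α_1 ⊕ α_2 ⊕ ⋯ ⊕ α_k` associated to a composition
`(r_1, …, r_k)`, where `α_i = 1` if `r_i = 1` and `α_i = 21` if `r_i = 2`. -/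
def blockPerm : (l : List ℕ) → Equiv.Perm (Fin l.sum)
  | [] => Equiv.refl _
  | a :: l =>
      (finCongr (by simp)).permCongr
        (finSumFinEquiv.symm.trans
          ((Equiv.sumCongr (partPerm a) (blockPerm l)).trans finSumFinEquiv))

/-- The map `f` from compositions of `n` of ones and twos to permutations of `[n]`. -/
def compToPerm (n : ℕ)
    (l : {l : List ℕ // (∀ x ∈ l, x = 1 ∨ x = 2) ∧ l.sum = n}) : Equiv.Perm (Fin n) :=
  (finCongr l.2.2).permCongr (blockPerm l.1)

def blockFun : List ℕ → ℕ → ℕ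
  | [], p => p
  | a :: l, p => if p < a then (if a = 2 then 1 - p else p) else a + blockFun l (p - a)

theorem blockFun_cons_of_le {a p : ℕ} (l : List ℕ) (h : a ≤ p) :
    blockFun (a :: l) p = a + blockFun l (p - a) := by
  rw [blockFun, if_neg (by omega)]

theorem blockFun_mem_Icc (l : List ℕ) (p : ℕ) : blockFun l p ∈ Set.Icc (p - 1) (p + 1) := by
  induction l generalizing p with
  | nil => simp only [blockFun, Set.mem_Icc]; omega
  | cons a l ih =>
    have := ih (p - a)
    simp only [blockFun, Set.mem_Icc] at this ⊢
    split_ifs <;> omega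

theorem val_partPerm (a : ℕ) (p : Fin a) :
    (partPerm a p : ℕ) = if a = 2 then 1 - (p : ℕ) else p := by
  unfold partPerm
  split_ifs with h
  · subst h
    fin_cases p <;> rfl
  · rfl

theorem val_permCongr_sumCongr {a m N : ℕ} (e : a + m = N) (σ : Equiv.Perm (Fin a))
    (τ : Equiv.Perm (Fin m)) (p : Fin N) :
    ((finCongr e).permCongr
      (finSumFinEquiv.symm.trans ((Equiv.sumCongr σ τ).trans finSumFinEquiv)) p : ℕ) =
    if h : (p : ℕ) < a then (σ ⟨p, h⟩ : ℕ)
    else a + (τ ⟨p - a, by omega⟩ : ℕ) := by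
  subst e
  obtain ⟨q | q, rfl⟩ := finSumFinEquiv.surjective p <;> simp

theorem val_blockPerm : ∀ (l : List ℕ) (p : Fin l.sum), (blockPerm l p : ℕ) = blockFun l p
  | [], p => rfl
  | a :: l, p => by
    refine (val_permCongr_sumCongr _ _ _ p).trans ?_
    rw [blockFun]
    split_ifs <;> simp_all [val_partPerm, val_blockPerm l]

theorem val_compToPerm (n : ℕ) (l : {l : List ℕ // (∀ x ∈ l, x = 1 ∨ x = 2) ∧ l.sum = n})
    (p : Fin n) : (compToPerm n l p : ℕ) = blockFun l.1 p :=
  val_blockPerm l.1 _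

theorem eq_of_blockFun_eq : ∀ {l l' : List ℕ}, (∀ x ∈ l, x = 1 ∨ x = 2) →
    (∀ x ∈ l', x = 1 ∨ x = 2) → l.sum = l'.sum → (∀ p < l.sum, blockFun l p = blockFun l' p) →
    l = l'
  | [], [], _, _, _, _ => rfl
  | [], b :: _, _, h', hs, _ => by have := h' b (by simp); simp only [List.sum_nil, List.sum_cons] at hs; omega
  | a :: _, [], h, _, hs, _ => by have := h a (by simp); simp only [List.sum_nil, List.sum_cons] at hs; omega
  | a :: l, b :: l', h, h', hs, hf => by
    simp only [List.mem_cons, forall_eq_or_imp, List.sum_cons] at h h' hs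
    have hab : a = b := by
      have := hf 0 (by simp only [List.sum_cons]; omega)
      simp only [blockFun] at this
      rcases h.1 with rfl | rfl <;> rcases h'.1 with rfl | rfl <;> simp_all
    subst hab
    rw [eq_of_blockFun_eq h.2 h'.2 (by omega) fun p hp => ?_]
    simpa [blockFun_cons_of_le] using hf (a + p) (by simp only [List.sum_cons]; omega)

theorem avoidsP3_of_forall_apply_mem_Icc {n : ℕ} {π : Equiv.Perm (Fin n)}
    (hπ : ∀ i : Fin n, (π i : ℕ) ∈ Set.Icc ((i : ℕ) - 1) (i + 1)) : AvoidsP3 π := by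
  rintro ⟨i, j, k, hij, hjk, hki⟩
  have := hπ i
  have := hπ k
  simp only [Set.mem_Icc, Fin.lt_def] at *
  omega

theorem Equiv.Perm.val_apply_inj {n : ℕ} (π : Equiv.Perm (Fin n)) {x y : Fin n} :
    (π x : ℕ) = π y ↔ (x : ℕ) = y := by
  simp only [Fin.val_inj, EmbeddingLike.apply_eq_iff_eq]

namespace AvoidsP3

variable {n : ℕ} {π : Equiv.Perm (Fin n)}

theorem apply_lt_apply (hπ : AvoidsP3 π) {i k : Fin n} (hik : (i : ℕ) + 2 ≤ k) : π i < π k := by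
  have hne : π i ≠ π k := π.injective.ne (Fin.ne_of_val_ne (by omega))
  refine lt_of_le_of_ne (not_lt.1 fun hki => hπ ⟨i, ⟨i + 1, by omega⟩, k, ?_, ?_, hki⟩) hne <;>
    simp only [Fin.lt_def] <;> omega

theorem apply_eq_or_swap (hπ : AvoidsP3 π) {m : ℕ} (hm : ∀ i : Fin n, (i : ℕ) < m ↔ (π i : ℕ) < m)
    (i : Fin n) (hi : (i : ℕ) = m) :
    (π i : ℕ) = m ∨ ∃ j : Fin n, (j : ℕ) = m + 1 ∧ (π i : ℕ) = m + 1 ∧ (π j : ℕ) = m := by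
  obtain ⟨a, ha⟩ := π.surjective ⟨m, by omega⟩
  replace ha : (π a : ℕ) = m := by simp [ha]
  have ha_lt : (a : ℕ) < m + 2 := by
    by_contra
    have := Fin.lt_def.1 (hπ.apply_lt_apply (i := i) (k := a) (by omega))
    have := hm i
    omega
  by_cases hai : (a : ℕ) = m
  · obtain rfl : a = i := Fin.ext (by omega)
    exact .inl ha
  have := hm a
  obtain ⟨b, hb⟩ := π.surjective ⟨m + 1, by omega⟩
  replace hb : (π b : ℕ) = m + 1 := by simp [hb]
  have hb_lt : (b : ℕ) < m + 2 := by
    by_contra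
    have := Fin.lt_def.1 (hπ.apply_lt_apply (i := i) (k := b) (by omega))
    have := hm i
    have := π.val_apply_inj (x := i) (y := a)
    omega
  have := hm b
  have := π.val_apply_inj (x := b) (y := a)
  obtain rfl : b = i := Fin.ext (by omega)
  exact .inr ⟨a, by omega, hb, ha⟩

theorem exists_blockFun_of_prefix (hπ : AvoidsP3 π) (d : ℕ) :
    ∀ m, m + d = n → (∀ i : Fin n, (i : ℕ) < m ↔ (π i : ℕ) < m) →
      ∃ l : List ℕ, (∀ x ∈ l, x = 1 ∨ x = 2) ∧ l.sum = d ∧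
        ∀ i : Fin n, m ≤ (i : ℕ) → (π i : ℕ) = m + blockFun l (i - m) := by
  induction d using Nat.strong_induction_on with
  | _ d ih =>
  intro m hmd hm
  rcases Nat.eq_zero_or_pos d with rfl | hd
  · exact ⟨[], by simp, rfl, fun i hi => by omega⟩
  obtain ⟨i₀, hi₀⟩ : ∃ i₀ : Fin n, (i₀ : ℕ) = m := ⟨⟨m, by omega⟩, rfl⟩
  rcases hπ.apply_eq_or_swap hm i₀ hi₀ with h₀ | ⟨j, hj, h₀, hj₀⟩
  · obtain ⟨l, hl, hsum, hπl⟩ := ih (d - 1) (by omega) (m + 1) (by omega) fun i => by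
      have := hm i
      have := π.val_apply_inj (x := i) (y := i₀)
      omega
    refine ⟨1 :: l, by simpa using hl, by simp only [List.sum_cons]; omega, fun i hi => ?_⟩
    rcases hi.eq_or_lt with hi | hi
    · obtain rfl : i₀ = i := Fin.ext (hi₀.trans hi)
      simp [h₀, hi₀, blockFun]
    · rw [hπl i hi, blockFun_cons_of_le _ (by omega), Nat.sub_sub]
      omega
  · obtain ⟨l, hl, hsum, hπl⟩ := ih (d - 2) (by omega) (m + 2) (by omega) fun i => by
      have := hm i
      have := π.val_apply_inj (x := i) (y := i₀)
      have := π.val_apply_inj (x := i) (y := j)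
      omega
    refine ⟨2 :: l, by simpa using hl, by simp only [List.sum_cons]; omega, fun i hi => ?_⟩
    rcases (show (i : ℕ) = m ∨ (i : ℕ) = m + 1 ∨ m + 2 ≤ i by omega) with hi | hi | hi
    · obtain rfl : i₀ = i := Fin.ext (hi₀.trans hi.symm)
      simp [h₀, hi₀, blockFun]
    · obtain rfl : j = i := Fin.ext (hj.trans hi.symm)
      simp [hj₀, hi, blockFun]
    · rw [hπl i hi, blockFun_cons_of_le _ (by omega), Nat.sub_sub]
      omega

theorem exists_blockFun (hπ : AvoidsP3 π) :
    ∃ l : List ℕ, (∀ x ∈ l, x = 1 ∨ x = 2) ∧ l.sum = n ∧ ∀ i : Fin n, (π i : ℕ) = blockFun l i := by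
  obtain ⟨l, hl, hsum, hπl⟩ := hπ.exists_blockFun_of_prefix n 0 (zero_add n) (by simp)
  exact ⟨l, hl, hsum, fun i => by simpa using hπl i (Nat.zero_le _)⟩

end AvoidsP3

/-- `f` is a bijection from the compositions of `n` of ones and twos onto `Av_n(P_3)`. -/
theorem stmt_10 (n : ℕ) :
    Function.Injective (compToPerm n) ∧
    Set.range (compToPerm n) = {π : Equiv.Perm (Fin n) | AvoidsP3 π} := by
  refine ⟨fun l l' h => Subtype.ext ?_, Set.ext fun π => ⟨?_, fun hπ => ?_⟩⟩
  · refine eq_of_blockFun_eq l.2.1 l'.2.1 (l.2.2.trans l'.2.2.symm) fun p hp => ?_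
    have := congrArg (fun σ : Equiv.Perm (Fin n) => (σ ⟨p, l.2.2 ▸ hp⟩ : ℕ)) h
    simpa only [val_compToPerm] using this
  · rintro ⟨l, rfl⟩
    exact avoidsP3_of_forall_apply_mem_Icc fun i => val_compToPerm n l i ▸ blockFun_mem_Icc _ _
  · obtain ⟨l, hl, hsum, hπl⟩ := hπ.exists_blockFun
    exact ⟨⟨l, hl, hsum⟩, Equiv.ext fun i => Fin.ext ((val_compToPerm n _ i).trans (hπl i).symm)⟩
end

section
/- The total number of levels over all compositions of n into ones and twos equals (n-1)·F(n-1), where F is the Fibonacci sequence with F(0)=0, F(1)=1. Equivalently, the number of marked compositions of n (compositions of ones and twos with exactly one level marked) is (n-1)F(n-1). -/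
/-!
Split off the first part `a` of a composition of `n + 2`; the rest is a composition of
`n + 2 - a`. A level of the whole composition is either a level of the rest or the pair formed
by the first two parts, and the latter happens exactly when the rest also starts with `a`.
Compositions of `m` starting with `1` resp. `2` are counted by `F m` resp. `F (m - 1)`, so the
number `T n` of marked compositions satisfies `T (n + 2) = T (n + 1) + T n + F (n + 1) + F (n - 1)`,
a recurrence also satisfied by `(n - 1) F (n - 1)`.
-/

open Finset

section Levels

variable {α : Type*} [DecidableEq α]

def levelIndices (l : List α) : Finset ℕ := {i ∈ range (l.length - 1) | l[i]? = l[i + 1]?}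

theorem mem_levelIndices {l : List α} {i : ℕ} :
    i ∈ levelIndices l ↔ i + 1 < l.length ∧ l[i]? = l[i + 1]? := by
  simp [levelIndices, Nat.lt_sub_iff_add_lt]

theorem levelIndices_cons_cons (a b : α) (t : List α) :
    levelIndices (a :: b :: t) =
      (if a = b then {0} else ∅) ∪ (levelIndices (b :: t)).map (addRightEmbedding 1) := by
  ext (_ | i) <;> by_cases hab : a = b <;> simp [mem_levelIndices, hab]

theorem card_levelIndices_cons (a : α) (l : List α) :
    #(levelIndices (a :: l)) = #(levelIndices l) + if l.head? = some a then 1 else 0 := by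
  cases l with
  | nil => simp [levelIndices]
  | cons b t =>
    rw [levelIndices_cons_cons, card_union_of_disjoint (by split_ifs <;> simp), card_map]
    by_cases hab : a = b <;> simp [hab, Ne.symm, add_comm]

end Levels

namespace OneTwoComposition

def IsComp (n : ℕ) (l : List ℕ) : Prop := (∀ x ∈ l, x = 1 ∨ x = 2) ∧ l.sum = n

theorem isComp_nil_iff {n : ℕ} : IsComp n [] ↔ n = 0 := by
  simp [IsComp, eq_comm]

theorem isComp_cons_iff {n a : ℕ} {t : List ℕ} :
    IsComp n (a :: t) ↔ (a = 1 ∨ a = 2) ∧ a ≤ n ∧ IsComp (n - a) t := by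
  simp only [IsComp, List.forall_mem_cons, List.sum_cons]
  constructor
  · rintro ⟨⟨ha, ht⟩, hsum⟩
    exact ⟨ha, by omega, ht, by omega⟩
  · rintro ⟨ha, han, ht, hsum⟩
    exact ⟨⟨ha, ht⟩, by omega⟩

def consEmb (a : ℕ) : List ℕ ↪ List ℕ := ⟨List.cons a, List.cons_injective⟩

theorem disjoint_map_consEmb {a b : ℕ} (hab : a ≠ b) (s t : Finset (List ℕ)) :
    Disjoint (s.map (consEmb a)) (t.map (consEmb b)) := by
  simp [disjoint_left, consEmb, hab.symm]

def comps : ℕ → Finset (List ℕ)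
  | 0 => {[]}
  | 1 => {[1]}
  | n + 2 => ((comps (n + 1)).map (consEmb 1)).disjUnion ((comps n).map (consEmb 2))
      (disjoint_map_consEmb (by decide) _ _)

theorem mem_comps : ∀ {n : ℕ} {l : List ℕ}, l ∈ comps n ↔ IsComp n l
  | 0, [] | 1, [] | n + 2, [] => by simp [comps, consEmb, isComp_nil_iff]
  | 0, a :: t => by simp [comps, isComp_cons_iff]; omega
  | 1, a :: t => by
    obtain rfl | ha : a = 1 ∨ a ≠ 1 := by omega
    · simp [comps, isComp_cons_iff, ← mem_comps (n := 0)]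
    · simp [comps, isComp_cons_iff, ha]
      omega
  | n + 2, a :: t => by
    obtain rfl | rfl | ha : a = 1 ∨ a = 2 ∨ (a ≠ 1 ∧ a ≠ 2) := by omega
    · simp [comps, consEmb, isComp_cons_iff, mem_comps]
    · simp [comps, consEmb, isComp_cons_iff, mem_comps]
    · simp [comps, consEmb, isComp_cons_iff, ha.1.symm, ha.2.symm, ha]

theorem card_comps : ∀ n, #(comps n) = Nat.fib (n + 1)
  | 0 | 1 => rfl
  | n + 2 => by
    rw [comps, card_disjUnion, card_map, card_map, card_comps (n + 1), card_comps n,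
      Nat.fib_add_two (n := n + 1), add_comm]

theorem card_filter_comps_head_eq_one : ∀ n, #{l ∈ comps n | l.head? = some 1} = Nat.fib n
  | 0 | 1 => rfl
  | n + 2 => by
    rw [comps, filter_disjUnion, card_disjUnion, filter_map, filter_map, card_map, card_map]
    simp [consEmb, Function.comp_def, card_comps]

theorem card_filter_comps_head_eq_two :
    ∀ n, #{l ∈ comps n | l.head? = some 2} = Nat.fib (n - 1)
  | 0 | 1 => rfl
  | n + 2 => by
    rw [comps, filter_disjUnion, card_disjUnion, filter_map, filter_map, card_map, card_map]
    simp [consEmb, Function.comp_def, card_comps]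

def markedComps (n : ℕ) : Finset (List ℕ × ℕ) :=
  (comps n).biUnion fun l => (levelIndices l).map ⟨(l, ·), Prod.mk_right_injective l⟩

theorem mem_markedComps {n : ℕ} {p : List ℕ × ℕ} :
    p ∈ markedComps n ↔ IsComp n p.1 ∧ p.2 + 1 < p.1.length ∧ p.1[p.2]? = p.1[p.2 + 1]? := by
  obtain ⟨l, i⟩ := p
  simp [markedComps, mem_comps, mem_levelIndices]

theorem card_markedComps (n : ℕ) : #(markedComps n) = ∑ l ∈ comps n, #(levelIndices l) := by
  rw [markedComps, card_biUnion]
  · simp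
  · intro l _ l' _ hne
    simp [Function.onFun, disjoint_left, Ne.symm hne]

theorem card_markedComps_add_two (n : ℕ) :
    #(markedComps (n + 2)) =
      #(markedComps (n + 1)) + #(markedComps n) + Nat.fib (n + 1) + Nat.fib (n - 1) := by
  simp only [card_markedComps, comps, sum_disjUnion, sum_map, consEmb,
    Function.Embedding.coeFn_mk, card_levelIndices_cons, sum_add_distrib, sum_boole,
    Nat.cast_id, card_filter_comps_head_eq_one, card_filter_comps_head_eq_two]
  ring

theorem card_markedComps_eq : ∀ n, #(markedComps n) = (n - 1) * Nat.fib (n - 1)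
  | 0 | 1 => rfl
  | 2 => by rw [card_markedComps_add_two, card_markedComps_eq 1, card_markedComps_eq 0]; rfl
  | n + 3 => by
    rw [card_markedComps_add_two, card_markedComps_eq (n + 2), card_markedComps_eq (n + 1)]
    simp only [Nat.add_succ_sub_one, Nat.add_sub_cancel, Nat.fib_add_two]
    ring

end OneTwoComposition

theorem stmt_11_general (n : ℕ) :
    Nat.card {p : List ℕ × ℕ //
        (∀ x ∈ p.1, x = 1 ∨ x = 2) ∧ p.1.sum = n ∧
        p.2 + 1 < p.1.length ∧ p.1[p.2]? = p.1[p.2 + 1]?} =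
      (n - 1) * Nat.fib (n - 1) := by
  rw [← OneTwoComposition.card_markedComps_eq, ← Nat.card_eq_finsetCard]
  exact Nat.card_congr <| Equiv.subtypeEquivRight fun p => by
    rw [OneTwoComposition.mem_markedComps, OneTwoComposition.IsComp, and_assoc]

/-- Marked compositions of `n` into ones and twos (a composition together with the
index of a marked level, i.e. a pair of equal adjacent parts) are counted by
`(n-1)·F(n-1)`. -/
theorem stmt_11 (n : ℕ) (hn : 1 ≤ n) :
    Nat.card {p : List ℕ × ℕ //
        (∀ x ∈ p.1, x = 1 ∨ x = 2) ∧ p.1.sum = n ∧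
        p.2 + 1 < p.1.length ∧ p.1[p.2]? = p.1[p.2 + 1]?} =
      (n - 1) * Nat.fib (n - 1) :=
  stmt_11_general n
end

section
/- The only simple permutations avoiding the POP P_4 are 1, 12, 21 and 3142. -/
/-- `π` is simple: every interval (a contiguous block of positions `[a, b)` mapped
onto a contiguous block of values `[c, c + (b-a))`) is trivial, i.e. has length
at most 1 or length `n`. -/
def IsSimple {n : ℕ} (π : Equiv.Perm (Fin n)) : Prop :=
  ∀ a b c : ℕ, a ≤ b → b ≤ n →
    (∀ i : Fin n, (a ≤ (i : ℕ) ∧ (i : ℕ) < b) ↔ (c ≤ (π i : ℕ) ∧ (π i : ℕ) < c + (b - a))) →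
    b - a ≤ 1 ∨ b - a = n

/-- `π` avoids the POP `P_4` (poset on `{1,2,3,4}` with `1 > 3`). -/
def AvoidsP4 {n : ℕ} (π : Equiv.Perm (Fin n)) : Prop :=
  ¬ ∃ i j k l : Fin n, i < j ∧ j < k ∧ k < l ∧ π k < π i

/-!
Avoiding `P₄` forces `π i < π k` whenever `i + 2 ≤ k ≤ n - 2`, so every value below `π 0` sits at
position `1` or `n - 1`. Simplicity then leaves a single shape: value `0` at position `0` or `n - 1`
would make a suffix or prefix an interval, and `π 0 = 1` would make positions `{0, 1}` one, so
`π = 2 0 ⋯ 1` (values `0`-indexed). Then positions `2, …, n - 2` carry exactly the values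
`3, …, n - 1`, an interval unless `n = 4`, which is `3142` (for `n = 3`, `201` ends in the interval
`01`).
-/

open Equiv

variable {n : ℕ}

theorem Equiv.Perm.val_apply_inj_s13 (π : Perm (Fin n)) {i j : Fin n} :
    (π i : ℕ) = π j ↔ (i : ℕ) = j := by
  rw [Fin.val_inj, π.apply_eq_iff_eq, Fin.val_inj]

theorem isSimple_of_le_two (π : Perm (Fin n)) (hn : n ≤ 2) : IsSimple π :=
  fun _ _ _ _ hbn _ => by omega

theorem avoidsP4_of_le_three (π : Perm (Fin n)) (hn : n ≤ 3) : AvoidsP4 π := by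
  rintro ⟨i, j, k, l, hij, hjk, hkl, -⟩
  have := l.isLt
  simp only [Fin.lt_def] at hij hjk hkl
  omega

/-- Only one inclusion has to be checked: an injective map of a block of positions into a block
of values of the same length is onto. -/
theorem not_isSimple_of_mapsTo (π : Perm (Fin n)) {a b c : ℕ} (hbn : b ≤ n)
    (hlen : 2 ≤ b - a) (hlen' : b - a < n)
    (hmaps : ∀ i : Fin n, a ≤ i → (i : ℕ) < b → c ≤ π i ∧ (π i : ℕ) < c + (b - a)) :
    ¬ IsSimple π := by
  intro hs
  suffices hint : ∀ i : Fin n,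
      (a ≤ (i : ℕ) ∧ (i : ℕ) < b) ↔ (c ≤ (π i : ℕ) ∧ (π i : ℕ) < c + (b - a)) by
    have := hs a b c (by omega) hbn hint
    omega
  refine fun i => ⟨fun hi => hmaps i hi.1 hi.2, fun hv => ?_⟩
  obtain ⟨j, hj, hji⟩ := Finset.surj_on_of_inj_on_of_card_le
    (s := Finset.Ico a b) (t := Finset.Ico c (c + (b - a)))
    (fun j hj => (π ⟨j, by simp at hj; omega⟩ : ℕ))
    (fun j hj => by simp at hj; simpa using hmaps _ hj.1 hj.2)
    (fun j₁ j₂ _ _ h => by simpa using π.val_apply_inj_s13.mp h)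
    (by simp) (π i) (by simpa using hv)
  simp only [Finset.mem_Ico] at hj
  have := π.val_apply_inj_s13.mp hji
  simp only at this
  omega

theorem AvoidsP4.apply_lt_apply {π : Perm (Fin n)} (h : AvoidsP4 π) {i k : Fin n}
    (hik : (i : ℕ) + 2 ≤ k) (hkn : (k : ℕ) + 2 ≤ n) : π i < π k := by
  by_contra! hle
  refine h ⟨i, ⟨i + 1, by omega⟩, k, ⟨k + 1, by omega⟩, ?_, ?_, ?_, ?_⟩
  · simp [Fin.lt_def]
  · simp [Fin.lt_def]; omega
  · simp [Fin.lt_def]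
  · exact lt_of_le_of_ne hle (π.injective.ne (by simp [Fin.ext_iff]; omega))

theorem Equiv.Perm.exists_val_apply_eq (π : Perm (Fin n)) {v : ℕ} (hv : v < n) :
    ∃ i, (π i : ℕ) = v :=
  ⟨π.symm ⟨v, hv⟩, by simp⟩

theorem AvoidsP4.val_eq_of_apply_lt_apply_zero {π : Perm (Fin n)} (h : AvoidsP4 π) (hn : 0 < n)
    {i : Fin n} (hi : π i < π ⟨0, hn⟩) : (i : ℕ) = 1 ∨ (i : ℕ) = n - 1 := by
  have hi0 : (i : ℕ) ≠ 0 := fun h0 => hi.ne (congrArg π (Fin.ext h0))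
  by_contra! hmid
  exact hi.asymm (h.apply_lt_apply (by simp; omega) (by omega))

theorem IsSimple.apply_eq_of_avoidsP4 {π : Perm (Fin n)} (hs : IsSimple π) (ha : AvoidsP4 π)
    (hn : 3 ≤ n) :
    (π ⟨0, by omega⟩ : ℕ) = 2 ∧ (π ⟨1, by omega⟩ : ℕ) = 0 ∧ (π ⟨n - 1, by omega⟩ : ℕ) = 1 := by
  set p₀ : Fin n := ⟨0, by omega⟩
  have hp₀ : (p₀ : ℕ) = 0 := rfl
  have below : ∀ i : Fin n, (π i : ℕ) < π p₀ → (i : ℕ) = 1 ∨ (i : ℕ) = n - 1 :=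
    fun i hi => ha.val_eq_of_apply_lt_apply_zero (by omega) hi
  obtain ⟨z, hz⟩ := π.exists_val_apply_eq (v := 0) (by omega)
  obtain ⟨o, ho⟩ := π.exists_val_apply_eq (v := 1) (by omega)
  obtain ⟨t, ht⟩ := π.exists_val_apply_eq (v := 2) (by omega)
  have := π.val_apply_inj_s13 (i := z) (j := o); have := π.val_apply_inj_s13 (i := z) (j := p₀)
  have := π.val_apply_inj_s13 (i := o) (j := p₀); have := π.val_apply_inj_s13 (i := t) (j := p₀)
  have := π.val_apply_inj_s13 (i := z) (j := t); have := π.val_apply_inj_s13 (i := o) (j := t)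
  have := below z; have := below o; have := below t
  have := z.isLt; have := o.isLt
  have hz₁ : (z : ℕ) = 1 := by
    rcases (show (z : ℕ) = 0 ∨ (z : ℕ) = 1 ∨ (z : ℕ) = n - 1 by omega) with h | h | h
    · refine absurd hs (not_isSimple_of_mapsTo π (a := 1) (b := n) (c := 1) le_rfl (by omega)
        (by omega) fun i hi _ => ⟨?_, by omega⟩)
      have := π.val_apply_inj_s13 (i := i) (j := z)
      omega
    · exact h
    · refine absurd hs (not_isSimple_of_mapsTo π (a := 0) (b := n - 1) (c := 1) (by omega)
        (by omega) (by omega) fun i _ hi => ⟨?_, by omega⟩)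
      have := π.val_apply_inj_s13 (i := i) (j := z)
      omega
  have ho₁ : (o : ℕ) = n - 1 := by
    by_contra ho₁
    refine absurd hs (not_isSimple_of_mapsTo π (a := 0) (b := 2) (c := 0) (by omega) le_rfl
      (by omega) fun i _ hi => ⟨Nat.zero_le _, ?_⟩)
    have := π.val_apply_inj_s13 (i := i) (j := z); have := π.val_apply_inj_s13 (i := i) (j := o)
    omega
  refine ⟨by omega, ?_, ?_⟩
  · rwa [show (⟨1, _⟩ : Fin n) = z from Fin.ext hz₁.symm]
  · rwa [show (⟨n - 1, _⟩ : Fin n) = o from Fin.ext ho₁.symm]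

theorem IsSimple.eq_four_of_avoidsP4 {π : Perm (Fin n)} (hs : IsSimple π) (ha : AvoidsP4 π)
    (hn : 3 ≤ n) : n = 4 := by
  obtain ⟨h₀, h₁, hlast⟩ := hs.apply_eq_of_avoidsP4 ha hn
  have other (i : Fin n) : ((π i : ℕ) = 2 ↔ (i : ℕ) = 0) ∧ ((π i : ℕ) = 0 ↔ (i : ℕ) = 1) ∧
      ((π i : ℕ) = 1 ↔ (i : ℕ) = n - 1) := by
    have e₀ := π.val_apply_inj_s13 (i := i) (j := ⟨0, by omega⟩)
    have e₁ := π.val_apply_inj_s13 (i := i) (j := ⟨1, by omega⟩)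
    have e₂ := π.val_apply_inj_s13 (i := i) (j := ⟨n - 1, by omega⟩)
    simp only at e₀ e₁ e₂
    omega
  rcases (show n = 3 ∨ n = 4 ∨ 5 ≤ n by omega) with rfl | h4 | hn5
  · exact absurd hs (not_isSimple_of_mapsTo π (a := 1) (b := 3) (c := 0) le_rfl le_rfl
      (by omega) fun i hi _ => ⟨Nat.zero_le _, by have := other i; have := (π i).isLt; omega⟩)
  · exact h4
  · exact absurd hs (not_isSimple_of_mapsTo π (a := 2) (b := n - 1) (c := 3) (by omega)
      (by omega) (by omega) fun i hi hi' => by have := other i; have := (π i).isLt; omega)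

theorem isSimple_3142 {π : Perm (Fin 4)} (hπ : ∀ i, (π i : ℕ) = ![2, 0, 3, 1] i) :
    IsSimple π := by
  intro a b c hab hb h
  have h₀ := h 0; have h₁ := h 1; have h₂ := h 2; have h₃ := h 3
  simp [hπ] at h₀ h₁ h₂ h₃
  omega

theorem avoidsP4_3142 {π : Perm (Fin 4)} (hπ : ∀ i, (π i : ℕ) = ![2, 0, 3, 1] i) :
    AvoidsP4 π := by
  rintro ⟨i, j, k, l, hij, hjk, hkl, hki⟩
  have := l.isLt
  simp only [Fin.lt_def] at hij hjk hkl
  obtain rfl : i = 0 := Fin.ext (by simp; omega)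
  obtain rfl : k = 2 := Fin.ext (by simp; omega)
  rw [Fin.lt_def, hπ, hπ] at hki
  simp at hki

/-- The only simple permutations avoiding `P_4` are 1, 12, 21 and 3142. -/
theorem stmt_13 (n : ℕ) (hn : 1 ≤ n) (π : Equiv.Perm (Fin n)) :
    (IsSimple π ∧ AvoidsP4 π) ↔
      (n = 1 ∨ n = 2 ∨
        (n = 4 ∧ ∀ i : Fin n, (π i : ℕ) =
          if (i : ℕ) = 0 then 2 else if (i : ℕ) = 1 then 0
          else if (i : ℕ) = 2 then 3 else 1)) := by
  constructor
  · rintro ⟨hs, ha⟩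
    obtain hn2 | hn3 := le_or_gt n 2
    · omega
    obtain rfl := hs.eq_four_of_avoidsP4 ha hn3
    obtain ⟨h₀, h₁, h₃⟩ := hs.apply_eq_of_avoidsP4 ha hn3
    have h₂ : (π ⟨2, by omega⟩ : ℕ) = 3 := by
      have e₀ := π.val_apply_inj_s13 (i := ⟨2, by omega⟩) (j := ⟨0, by omega⟩)
      have e₁ := π.val_apply_inj_s13 (i := ⟨2, by omega⟩) (j := ⟨1, by omega⟩)
      have e₃ := π.val_apply_inj_s13 (i := ⟨2, by omega⟩) (j := ⟨4 - 1, by omega⟩)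
      simp only at e₀ e₁ e₃
      omega
    refine Or.inr (Or.inr ⟨rfl, fun i => ?_⟩)
    fin_cases i <;> assumption
  · rintro (rfl | rfl | ⟨rfl, hv⟩)
    · exact ⟨isSimple_of_le_two π (by norm_num), avoidsP4_of_le_three π (by norm_num)⟩
    · exact ⟨isSimple_of_le_two π le_rfl, avoidsP4_of_le_three π (by norm_num)⟩
    · have hπ : ∀ i, (π i : ℕ) = ![2, 0, 3, 1] i := fun i => by rw [hv i]; fin_cases i <;> rfl
      exact ⟨isSimple_3142 hπ, avoidsP4_3142 hπ⟩
end

section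
/- The only simple permutations avoiding the POP λ (size 4, with 1 > 2 and 1 > 4) are 1, 12, 21 and 2413. -/
set_option maxRecDepth 10000
set_option maxHeartbeats 1000000


/-- `π` contains the POP `λ` (size 4, with `1 > 2` and `1 > 4`): there are
positions `i < j < k < l` with `π i > π j` and `π i > π l`. -/
def ContainsLam {n : ℕ} (π : Equiv.Perm (Fin n)) : Prop :=
  ∃ i j k l : Fin n, i < j ∧ j < k ∧ k < l ∧ π j < π i ∧ π l < π i


def SBf (n : ℕ) (f : Fin n → Fin n) : Prop :=
  ∀ a b c : Fin (n+1), (a:ℕ) ≤ (b:ℕ) →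
    (∀ i : Fin n, ((a:ℕ) ≤ (i : ℕ) ∧ (i : ℕ) < (b:ℕ)) ↔
      ((c:ℕ) ≤ (f i : ℕ) ∧ (f i : ℕ) < (c:ℕ) + ((b:ℕ) - (a:ℕ)))) →
    (b:ℕ) - (a:ℕ) ≤ 1 ∨ (b:ℕ) - (a:ℕ) = n

def CLf (n : ℕ) (f : Fin n → Fin n) : Prop :=
  ∃ i j k l : Fin n, i < j ∧ j < k ∧ k < l ∧ f j < f i ∧ f l < f i

instance (n f) : Decidable (SBf n f) := by unfold SBf; infer_instance
instance (n f) : Decidable (CLf n f) := by unfold CLf; infer_instance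

lemma L3 : ∀ f : Fin 3 → Fin 3, Function.Injective f → ¬ SBf 3 f := by decide

lemma L4 : ∀ f : Fin 4 → Fin 4, Function.Injective f → SBf 4 f → ¬ CLf 4 f →
    ∀ i : Fin 4, (f i : ℕ) =
      if (i : ℕ) = 0 then 1 else if (i : ℕ) = 1 then 3
      else if (i : ℕ) = 2 then 0 else 2 := by decide

lemma L5 : ∀ f : Fin 4 → Fin 4,
    (∀ i : Fin 4, (f i : ℕ) =
      if (i : ℕ) = 0 then 1 else if (i : ℕ) = 1 then 3
      else if (i : ℕ) = 2 then 0 else 2) →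
    SBf 4 f ∧ ¬ CLf 4 f := by decide

lemma simple_to_sb {n : ℕ} (π : Equiv.Perm (Fin n)) (hS : IsSimple π) : SBf n ⇑π :=
  fun a b c hab hiff => hS a b c hab (by have := b.isLt; omega) hiff

lemma sb_to_simple {n : ℕ} (π : Equiv.Perm (Fin n)) (h : SBf n ⇑π) : IsSimple π := by
  intro a b c hab hbn hiff
  rcases Nat.lt_or_ge n c with hc | hc
  · left
    by_contra hba
    have hab' : a < b := by omega
    have han : a < n := by omega
    have h1 := ((hiff ⟨a, han⟩).mp ⟨le_rfl, hab'⟩).1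
    have h2 := (π ⟨a, han⟩).isLt
    omega
  · exact h ⟨a, by omega⟩ ⟨b, by omega⟩ ⟨c, by omega⟩ hab hiff

lemma master {n : ℕ} (hn : 5 ≤ n) (π : Equiv.Perm (Fin n))
    (hS : IsSimple π) (hC : ¬ ContainsLam π) : False := by
  have hA : ∀ i j l : Fin n, (i:ℕ) < (j:ℕ) → (j:ℕ) + 2 ≤ (l:ℕ) →
      (π j : ℕ) < (π i : ℕ) → (π l : ℕ) < (π i : ℕ) → False := by
    intro i j l h1 h2 h3 h4
    refine hC ⟨i, j, ⟨(j:ℕ)+1, by omega⟩, l, Fin.lt_def.mpr h1, Fin.lt_def.mpr ?_,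
      Fin.lt_def.mpr ?_, Fin.lt_def.mpr h3, Fin.lt_def.mpr h4⟩
    · show (j:ℕ) < (j:ℕ)+1; omega
    · show (j:ℕ)+1 < (l:ℕ); omega
  have hinj : ∀ i j : Fin n, (π i : ℕ) = (π j : ℕ) → (i:ℕ) = (j:ℕ) := by
    intro i j h
    exact congrArg Fin.val (π.injective (Fin.ext h))
  obtain ⟨e0, he00⟩ : ∃ i : Fin n, (i:ℕ) = 0 := ⟨⟨0, by omega⟩, rfl⟩
  obtain ⟨e1, he11⟩ : ∃ i : Fin n, (i:ℕ) = 1 := ⟨⟨1, by omega⟩, rfl⟩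
  obtain ⟨e2, he22⟩ : ∃ i : Fin n, (i:ℕ) = 2 := ⟨⟨2, by omega⟩, rfl⟩
  obtain ⟨e3, he33⟩ : ∃ i : Fin n, (i:ℕ) = 3 := ⟨⟨3, by omega⟩, rfl⟩
  obtain ⟨e4, he44⟩ : ∃ i : Fin n, (i:ℕ) = 4 := ⟨⟨4, by omega⟩, rfl⟩
  have hvei : ∀ i j : Fin n, (i:ℕ) = (j:ℕ) → i = j := fun i j h => Fin.ext h
  -- Case 1 : π 0 = 0
  by_cases h0 : (π e0 : ℕ) = 0
  · have key := hS 1 n 1 (by omega) (le_refl n) ?_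
    · omega
    · intro i
      constructor
      · rintro ⟨hi1, _⟩
        refine ⟨?_, by have := (π i).isLt; omega⟩
        rcases Nat.eq_zero_or_pos (π i : ℕ) with h | h
        · exfalso; have := hinj i e0 (by omega); omega
        · omega
      · rintro ⟨hi1, _⟩
        refine ⟨?_, i.isLt⟩
        rcases Nat.eq_zero_or_pos (i:ℕ) with h | h
        · exfalso
          have : i = e0 := hvei _ _ (by omega)
          rw [this] at hi1; omega
        · omega
  -- Case 2 : adjacent pair with adjacent values
  by_cases hadj : ∃ i j : Fin n, (j:ℕ) = (i:ℕ)+1 ∧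
      ((π j : ℕ) = (π i : ℕ) + 1 ∨ (π i : ℕ) = (π j : ℕ) + 1)
  · obtain ⟨i, j, hji, hv⟩ := hadj
    have key := hS (i:ℕ) ((i:ℕ)+2) (min (π i : ℕ) (π j : ℕ)) (by omega)
      (by have := j.isLt; omega) ?_
    · omega
    · intro x
      constructor
      · rintro ⟨hx1, hx2⟩
        have : (x:ℕ) = (i:ℕ) ∨ (x:ℕ) = (j:ℕ) := by omega
        rcases this with h | h
        · have : x = i := hvei _ _ h
          rw [this]; omega
        · have : x = j := hvei _ _ h
          rw [this]; omega
      · rintro ⟨hx1, hx2⟩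
        have : (π x : ℕ) = (π i : ℕ) ∨ (π x : ℕ) = (π j : ℕ) := by omega
        rcases this with h | h
        · have := hinj x i h; omega
        · have := hinj x j h; omega
  push_neg at hadj
  have hN : ∀ i j : Fin n, (j:ℕ) = (i:ℕ)+1 →
      (π j : ℕ) ≠ (π i : ℕ) + 1 ∧ (π i : ℕ) ≠ (π j : ℕ) + 1 := by
    intro i j h
    exact hadj i j h
  -- positions of small values
  obtain ⟨q, hq0⟩ : ∃ q : Fin n, (π q : ℕ) = 0 :=
    ⟨π.symm e0, by rw [Equiv.apply_symm_apply]; exact he00⟩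
  obtain ⟨p1, hp11⟩ : ∃ p : Fin n, (π p : ℕ) = 1 :=
    ⟨π.symm e1, by rw [Equiv.apply_symm_apply]; exact he11⟩
  obtain ⟨r, hr2⟩ : ∃ p : Fin n, (π p : ℕ) = 2 :=
    ⟨π.symm e2, by rw [Equiv.apply_symm_apply]; exact he22⟩
  obtain ⟨s, hs3⟩ : ∃ p : Fin n, (π p : ℕ) = 3 :=
    ⟨π.symm e3, by rw [Equiv.apply_symm_apply]; exact he33⟩
  obtain ⟨t, ht4⟩ : ∃ p : Fin n, (π p : ℕ) = 4 :=
    ⟨π.symm e4, by rw [Equiv.apply_symm_apply]; exact he44⟩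
  have hqe : ∀ i : Fin n, (i:ℕ) ≠ (q:ℕ) → (π i : ℕ) ≠ 0 := by
    intro i h hh; exact h (hinj i q (by omega))
  -- Step A : π 0 ≤ 2
  have hA2 : (π e0 : ℕ) ≤ 2 := by
    by_contra hh
    push_neg at hh
    have hqp : 1 ≤ (q:ℕ) := by
      rcases Nat.eq_zero_or_pos (q:ℕ) with h | h
      · exfalso; have : q = e0 := hvei _ _ (by omega); rw [this] at hq0; omega
      · omega
    have hp1p : 1 ≤ (p1:ℕ) := by
      rcases Nat.eq_zero_or_pos (p1:ℕ) with h | h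
      · exfalso; have : p1 = e0 := hvei _ _ (by omega); rw [this] at hp11; omega
      · omega
    have hrp : 1 ≤ (r:ℕ) := by
      rcases Nat.eq_zero_or_pos (r:ℕ) with h | h
      · exfalso; have : r = e0 := hvei _ _ (by omega); rw [this] at hr2; omega
      · omega
    have hd1 : (q:ℕ) ≠ (p1:ℕ) := fun h => by rw [hvei q p1 h] at hq0; omega
    have hd2 : (q:ℕ) ≠ (r:ℕ) := fun h => by rw [hvei q r h] at hq0; omega
    have hd3 : (p1:ℕ) ≠ (r:ℕ) := fun h => by rw [hvei p1 r h] at hp11; omega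
    have : (q:ℕ)+2 ≤ (p1:ℕ) ∨ (q:ℕ)+2 ≤ (r:ℕ) ∨ (p1:ℕ)+2 ≤ (q:ℕ) ∨
        (p1:ℕ)+2 ≤ (r:ℕ) ∨ (r:ℕ)+2 ≤ (q:ℕ) ∨ (r:ℕ)+2 ≤ (p1:ℕ) := by omega
    rcases this with h|h|h|h|h|h
    · exact hA e0 q p1 (by omega) h (by omega) (by omega)
    · exact hA e0 q r (by omega) h (by omega) (by omega)
    · exact hA e0 p1 q (by omega) h (by omega) (by omega)
    · exact hA e0 p1 r (by omega) h (by omega) (by omega)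
    · exact hA e0 r q (by omega) h (by omega) (by omega)
    · exact hA e0 r p1 (by omega) h (by omega) (by omega)
  -- Step B : π 0 = 1
  have hπ0 : (π e0 : ℕ) = 1 := by
    rcases Nat.lt_or_ge (π e0 : ℕ) 2 with h | h
    · omega
    · exfalso
      have h2 : (π e0 : ℕ) = 2 := by omega
      have hqp : 1 ≤ (q:ℕ) := by
        rcases Nat.eq_zero_or_pos (q:ℕ) with hz | hz
        · exfalso; have : q = e0 := hvei _ _ (by omega); rw [this] at hq0; omega
        · omega
      have hp1p : 1 ≤ (p1:ℕ) := by
        rcases Nat.eq_zero_or_pos (p1:ℕ) with hz | hz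
        · exfalso; have : p1 = e0 := hvei _ _ (by omega); rw [this] at hp11; omega
        · omega
      have hd1 : (q:ℕ) ≠ (p1:ℕ) := fun hh => by rw [hvei q p1 hh] at hq0; omega
      rcases Nat.lt_or_ge ((q:ℕ)+1) (p1:ℕ) with hh | hh
      · exact hA e0 q p1 (by omega) (by omega) (by omega) (by omega)
      rcases Nat.lt_or_ge ((p1:ℕ)+1) (q:ℕ) with hh2 | hh2
      · exact hA e0 p1 q (by omega) (by omega) (by omega) (by omega)
      rcases Nat.lt_or_ge (q:ℕ) (p1:ℕ) with hh3 | hh3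
      · exact (hN q p1 (by omega)).1 (by omega)
      · exact (hN p1 q (by omega)).2 (by omega)
  -- F : positions with values below π i after i are near q
  have hF : ∀ i p : Fin n, (i:ℕ) < (q:ℕ) → (i:ℕ) < (p:ℕ) → (π p : ℕ) < (π i : ℕ) →
      (q:ℕ) ≤ (p:ℕ)+1 ∧ (p:ℕ) ≤ (q:ℕ)+1 := by
    intro i p h1 h2 h3
    have hπi : 1 ≤ (π i : ℕ) := by
      have := hqe i (by omega); omega
    constructor
    · by_contra hh
      push_neg at hh
      exact hA i p q h2 (by omega) h3 (by omega)
    · by_contra hh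
      push_neg at hh
      exact hA i q p h1 (by omega) (by omega) h3
  -- increasing prefix
  have hInc : ∀ i p : Fin n, (i:ℕ) < (p:ℕ) → (p:ℕ)+2 ≤ (q:ℕ) → (π i : ℕ) < (π p : ℕ) := by
    intro i p h1 h2
    rcases Nat.lt_trichotomy (π i : ℕ) (π p : ℕ) with h|h|h
    · exact h
    · exfalso; have := hinj i p h; omega
    · exfalso; have := hF i p (by omega) h1 h; omega
  -- q ≥ 2
  have hq2 : 2 ≤ (q:ℕ) := by
    have h1 : (q:ℕ) ≠ 0 := by
      intro h; have : q = e0 := hvei _ _ (by omega); rw [this] at hq0; omega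
    have h2 : (q:ℕ) ≠ 1 := by
      intro h
      exact (hN e0 q (by omega)).2 (by omega)
    omega
  -- q < 3
  have hq3 : (q:ℕ) < 3 := by
    by_contra hh
    push_neg at hh
    have hπ1 : 3 ≤ (π e1 : ℕ) := by
      have h01 : (π e0 : ℕ) < (π e1 : ℕ) := hInc e0 e1 (by omega) (by omega)
      have := (hN e0 e1 (by omega)).1
      omega
    have hr0 : (r:ℕ) ≠ 0 := by
      intro h; have : r = e0 := hvei _ _ (by omega); rw [this] at hr2; omega
    have hr1 : (r:ℕ) ≠ 1 := by
      intro h; have : r = e1 := hvei _ _ (by omega); rw [this] at hr2; omega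
    have hrq : (r:ℕ) ≠ (q:ℕ) := fun h => by rw [hvei r q h] at hr2; omega
    have hFr := hF e1 r (by omega) (by omega) (by omega)
    have hπ13 : (π e1 : ℕ) = 3 := by
      by_contra hne
      have h4 : 4 ≤ (π e1 : ℕ) := by
        have hz : (π e1 : ℕ) ≠ 0 := hqe e1 (by omega)
        have h1 : (π e1 : ℕ) ≠ 1 := by
          intro h; have := hinj e1 e0 (by omega); omega
        have h2 : (π e1 : ℕ) ≠ 2 := by
          intro h; have := hinj e1 r (by omega); omega
        omega
      have hs0 : (s:ℕ) ≠ 0 := by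
        intro h; have : s = e0 := hvei _ _ (by omega); rw [this] at hs3; omega
      have hs1 : (s:ℕ) ≠ 1 := by
        intro h; have : s = e1 := hvei _ _ (by omega); rw [this] at hs3; omega
      have hsq : (s:ℕ) ≠ (q:ℕ) := fun h => by rw [hvei s q h] at hs3; omega
      have hsr : (s:ℕ) ≠ (r:ℕ) := fun h => by rw [hvei s r h] at hs3; omega
      have hFs := hF e1 s (by omega) (by omega) (by omega)
      rcases Nat.lt_or_ge (r:ℕ) (s:ℕ) with hrs | hrs
      · exact hA e1 r s (by omega) (by omega) (by omega) (by omega)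
      · exact hA e1 s r (by omega) (by omega) (by omega) (by omega)
    rcases Nat.lt_or_ge (q:ℕ) 4 with hq4 | hq4
    · -- q = 3
      rcases Nat.lt_or_ge (r:ℕ) (q:ℕ) with hcase | hcase
      · -- r = 2
        have : r = e2 := hvei _ _ (by omega)
        have hπ2 : (π e2 : ℕ) = 2 := by rw [← this]; exact hr2
        exact (hN e1 e2 (by omega)).2 (by omega)
      · -- r = 4
        have hre4 : r = e4 := hvei _ _ (by omega)
        have hπ4 : (π e4 : ℕ) = 2 := by rw [← hre4]; exact hr2
        have hπ2big : 5 ≤ (π e2 : ℕ) := by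
          have h0' : (π e2 : ℕ) ≠ 0 := hqe e2 (by omega)
          have h1' : (π e2 : ℕ) ≠ 1 := by
            intro h; have := hinj e2 e0 (by omega); omega
          have h2' : (π e2 : ℕ) ≠ 2 := by
            intro h; have := hinj e2 r (by omega); omega
          have h3' : (π e2 : ℕ) ≠ 3 := by
            intro h; have := hinj e2 e1 (by omega); omega
          have h4' := (hN e1 e2 (by omega)).1
          omega
        have ht5 : 5 ≤ (t:ℕ) := by
          have t0 : (t:ℕ) ≠ 0 := by
            intro h; have : t = e0 := hvei _ _ (by omega); rw [this] at ht4; omega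
          have t1 : (t:ℕ) ≠ 1 := by
            intro h; have : t = e1 := hvei _ _ (by omega); rw [this] at ht4; omega
          have t2 : (t:ℕ) ≠ 2 := by
            intro h; have : t = e2 := hvei _ _ (by omega); rw [this] at ht4; omega
          have t3 : (t:ℕ) ≠ (q:ℕ) := fun h => by rw [hvei t q h] at ht4; omega
          have t4 : (t:ℕ) ≠ (r:ℕ) := fun h => by rw [hvei t r h] at ht4; omega
          omega
        exact hA e2 q t (by omega) (by omega) (by omega) (by omega)
    · -- q ≥ 4
      have hπ2big : 5 ≤ (π e2 : ℕ) := by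
        have h12 : (π e1 : ℕ) < (π e2 : ℕ) := hInc e1 e2 (by omega) (by omega)
        have := (hN e1 e2 (by omega)).1
        omega
      have ht0 : (t:ℕ) ≠ 0 := by
        intro h; have : t = e0 := hvei _ _ (by omega); rw [this] at ht4; omega
      have ht1 : (t:ℕ) ≠ 1 := by
        intro h; have : t = e1 := hvei _ _ (by omega); rw [this] at ht4; omega
      have ht2 : (t:ℕ) ≠ 2 := by
        intro h; have : t = e2 := hvei _ _ (by omega); rw [this] at ht4; omega
      have htq : (t:ℕ) ≠ (q:ℕ) := fun h => by rw [hvei t q h] at ht4; omega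
      have htr : (t:ℕ) ≠ (r:ℕ) := fun h => by rw [hvei t r h] at ht4; omega
      have hFt := hF e2 t (by omega) (by omega) (by omega)
      rcases Nat.lt_or_ge (r:ℕ) (t:ℕ) with hrt | hrt
      · exact hA e2 r t (by omega) (by omega) (by omega) (by omega)
      · exact hA e2 t r (by omega) (by omega) (by omega) (by omega)
  -- now q = 2
  have hqv : (q:ℕ) = 2 := by omega
  have hqe2 : q = e2 := hvei _ _ (by omega)
  have hπ2 : (π e2 : ℕ) = 0 := by rw [← hqe2]; exact hq0
  have hπ1ge : 3 ≤ (π e1 : ℕ) := by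
    have hz : (π e1 : ℕ) ≠ 0 := hqe e1 (by omega)
    have h1 : (π e1 : ℕ) ≠ 1 := by
      intro h; have := hinj e1 e0 (by omega); omega
    have h2 := (hN e0 e1 (by omega)).1
    omega
  have hr3 : (r:ℕ) = 3 := by
    have hr0 : (r:ℕ) ≠ 0 := by
      intro h; have : r = e0 := hvei _ _ (by omega); rw [this] at hr2; omega
    have hr1 : (r:ℕ) ≠ 1 := by
      intro h; have : r = e1 := hvei _ _ (by omega); rw [this] at hr2; omega
    have hrq : (r:ℕ) ≠ (q:ℕ) := fun h => by rw [hvei r q h] at hr2; omega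
    have hFr := hF e1 r (by omega) (by omega) (by omega)
    omega
  have hre3 : r = e3 := hvei _ _ (by omega)
  have hπ3 : (π e3 : ℕ) = 2 := by rw [← hre3]; exact hr2
  have hπ1 : (π e1 : ℕ) = 3 := by
    by_contra hne
    have h4 : 4 ≤ (π e1 : ℕ) := by
      have h3 : (π e1 : ℕ) ≠ 3 := hne
      omega
    have hs4 : 4 ≤ (s:ℕ) := by
      have s0 : (s:ℕ) ≠ 0 := by
        intro h; have : s = e0 := hvei _ _ (by omega); rw [this] at hs3; omega
      have s1 : (s:ℕ) ≠ 1 := by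
        intro h; have : s = e1 := hvei _ _ (by omega); rw [this] at hs3; omega
      have s2 : (s:ℕ) ≠ 2 := by
        intro h; have : s = e2 := hvei _ _ (by omega); rw [this] at hs3; omega
      have s3 : (s:ℕ) ≠ 3 := by
        intro h; have : s = e3 := hvei _ _ (by omega); rw [this] at hs3; omega
      omega
    exact hA e1 e2 s (by omega) (by omega) (by omega) (by omega)
  -- final interval [0,4)
  have key := hS 0 4 0 (by omega) (by omega) ?_
  · omega
  · intro i
    constructor
    · rintro ⟨_, hi2⟩
      refine ⟨by omega, ?_⟩
      have : (i:ℕ) = 0 ∨ (i:ℕ) = 1 ∨ (i:ℕ) = 2 ∨ (i:ℕ) = 3 := by omega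
      rcases this with h|h|h|h
      · have : i = e0 := hvei _ _ (by omega); rw [this]; omega
      · have : i = e1 := hvei _ _ (by omega); rw [this]; omega
      · have : i = e2 := hvei _ _ (by omega); rw [this]; omega
      · have : i = e3 := hvei _ _ (by omega); rw [this]; omega
    · rintro ⟨_, hi2⟩
      refine ⟨by omega, ?_⟩
      have : (π i:ℕ) = 0 ∨ (π i:ℕ) = 1 ∨ (π i:ℕ) = 2 ∨ (π i:ℕ) = 3 := by omega
      rcases this with h|h|h|h
      · have := hinj i e2 (by omega); omega
      · have := hinj i e0 (by omega); omega
      · have := hinj i e3 (by omega); omega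
      · have := hinj i e1 (by omega); omega


/-- The only simple permutations avoiding `λ` are 1, 12, 21 and 2413. -/
theorem stmt_14 (n : ℕ) (hn : 1 ≤ n) (π : Equiv.Perm (Fin n)) :
    (IsSimple π ∧ ¬ ContainsLam π) ↔
      (n = 1 ∨ n = 2 ∨
        (n = 4 ∧ ∀ i : Fin n, (π i : ℕ) =
          if (i : ℕ) = 0 then 1 else if (i : ℕ) = 1 then 3
          else if (i : ℕ) = 2 then 0 else 2)) := by

  constructor
  · rintro ⟨hS, hC⟩
    rcases Nat.lt_or_ge n 5 with h5 | h5
    · interval_cases n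
      · exact Or.inl rfl
      · exact Or.inr (Or.inl rfl)
      · exact absurd (simple_to_sb π hS) (L3 ⇑π π.injective)
      · exact Or.inr (Or.inr ⟨rfl, L4 ⇑π π.injective (simple_to_sb π hS) hC⟩)
    · exact (master h5 π hS hC).elim
  · rintro (rfl | rfl | ⟨rfl, hπ⟩)
    · constructor
      · intro a b c hab hbn hiff
        left; omega
      · rintro ⟨i, j, k, l, h1, h2, h3, _, _⟩
        rw [Fin.lt_def] at h1 h2 h3
        have := l.isLt
        omega
    · constructor
      · intro a b c hab hbn hiff
        omega
      · rintro ⟨i, j, k, l, h1, h2, h3, _, _⟩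
        rw [Fin.lt_def] at h1 h2 h3
        have := l.isLt
        omega
    · obtain ⟨hsb, hcl⟩ := L5 ⇑π hπ
      exact ⟨sb_to_simple π hsb, hcl⟩
end

section
/- For n ≥ 4, the skew sum decomposable permutations of length n avoiding the POP λ are exactly: 21[I_{n-1}, 12], 21[I_{n-2}, 21], and 2431[I_ℓ, I_{n-ℓ-2}, 1, 1] for ℓ ∈ {2, ..., n-1}; in particular there are exactly n of them. -/
/-- `π` is skew sum decomposable: for some `0 < m < n` the first `m` positions
carry exactly the `m` largest values. -/
def SkewDecomposable {n : ℕ} (π : Equiv.Perm (Fin n)) : Prop :=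
  ∃ m : ℕ, 0 < m ∧ m < n ∧ ∀ i : Fin n, ((i : ℕ) < m ↔ n - m ≤ (π i : ℕ))

lemma inj_ne {n : ℕ} (π : Equiv.Perm (Fin n)) {a b : Fin n} (h : (a : ℕ) ≠ (b : ℕ)) :
    (π a : ℕ) ≠ (π b : ℕ) := fun e => h (congrArg Fin.val (π.injective (Fin.ext e)))

lemma chain {n : ℕ} (π : Equiv.Perm (Fin n)) (K : ℕ)
    (hmono : ∀ i j : Fin n, (i : ℕ) < (j : ℕ) → (j : ℕ) < K → (π i : ℕ) < (π j : ℕ)) :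
    ∀ i j : Fin n, (i : ℕ) ≤ (j : ℕ) → (j : ℕ) < K →
      (π i : ℕ) + ((j : ℕ) - (i : ℕ)) ≤ (π j : ℕ) := by
  suffices H : ∀ d : ℕ, ∀ i j : Fin n, (j : ℕ) = (i : ℕ) + d → (j : ℕ) < K →
      (π i : ℕ) + d ≤ (π j : ℕ) by
    intro i j h1 h2
    have := H ((j : ℕ) - (i : ℕ)) i j (by omega) h2
    omega
  intro d
  induction d with
  | zero =>
    intro i j h1 h2
    have h : i = j := Fin.ext (by omega)
    subst h
    omega
  | succ d ih =>
    intro i j h1 h2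
    obtain ⟨e, he⟩ : ∃ e : Fin n, (e : ℕ) = (i : ℕ) + d :=
      ⟨⟨(i : ℕ) + d, by have := j.isLt; omega⟩, rfl⟩
    have h3 := ih i e (by omega) (by omega)
    have h4 := hmono e j (by omega) h2
    omega

lemma mono_of_avoid {n : ℕ} (π : Equiv.Perm (Fin n)) (hav : ¬ ContainsLam π)
    (i j k l : Fin n) (hij : (i : ℕ) < (j : ℕ)) (hjk : (j : ℕ) < (k : ℕ))
    (hkl : (k : ℕ) < (l : ℕ)) (hlast : (π l : ℕ) < (π i : ℕ)) : (π i : ℕ) < (π j : ℕ) := by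
  by_contra hcon
  have hne := inj_ne π (show (i : ℕ) ≠ (j : ℕ) by omega)
  exact hav ⟨i, j, k, l, Fin.lt_def.mpr hij, Fin.lt_def.mpr hjk, Fin.lt_def.mpr hkl,
    Fin.lt_def.mpr (by omega), Fin.lt_def.mpr hlast⟩

lemma key {n : ℕ} (hn : 4 ≤ n) (π : Equiv.Perm (Fin n)) :
    (SkewDecomposable π ∧ ¬ ContainsLam π) ↔
      ((∀ i : Fin n, (π i : ℕ) =
          if (i : ℕ) = n - 2 then 0 else if (i : ℕ) = n - 1 then 1 else (i : ℕ) + 2) ∨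
       (∀ i : Fin n, (π i : ℕ) =
          if (i : ℕ) = n - 2 then 1 else if (i : ℕ) = n - 1 then 0 else (i : ℕ) + 2) ∨
       ∃ ℓ : ℕ, 2 ≤ ℓ ∧ ℓ ≤ n - 1 ∧
         ∀ i : Fin n, (π i : ℕ) =
           if (i : ℕ) = n - 1 then 0 else if (i : ℕ) = n - 2 then ℓ
           else if (i : ℕ) + 1 < ℓ then (i : ℕ) + 1 else (i : ℕ) + 2) := by
  constructor
  · rintro ⟨⟨m, hm0, hmn, hskew⟩, hav⟩
    obtain ⟨c, hc⟩ : ∃ c : Fin n, (c : ℕ) = n - 2 := ⟨⟨n - 2, by omega⟩, rfl⟩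
    obtain ⟨d, hd⟩ : ∃ d : Fin n, (d : ℕ) = n - 1 := ⟨⟨n - 1, by omega⟩, rfl⟩
    obtain ⟨a, ha⟩ : ∃ a : Fin n, (a : ℕ) = 0 := ⟨⟨0, by omega⟩, rfl⟩
    obtain ⟨b, hb⟩ : ∃ b : Fin n, (b : ℕ) = n - 3 := ⟨⟨n - 3, by omega⟩, rfl⟩
    have hm2 : n - 2 ≤ m := by
      by_contra hlt
      push_neg at hlt
      obtain ⟨i0, hi0⟩ : ∃ x : Fin n, (x : ℕ) = m - 1 := ⟨⟨m - 1, by omega⟩, rfl⟩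
      obtain ⟨j0, hj0⟩ : ∃ x : Fin n, (x : ℕ) = m := ⟨⟨m, by omega⟩, rfl⟩
      obtain ⟨k0, hk0⟩ : ∃ x : Fin n, (x : ℕ) = m + 1 := ⟨⟨m + 1, by omega⟩, rfl⟩
      obtain ⟨l0, hl0⟩ : ∃ x : Fin n, (x : ℕ) = m + 2 := ⟨⟨m + 2, by omega⟩, rfl⟩
      have h1 := hskew i0
      have h2 := hskew j0
      have h3 := hskew l0
      exact hav ⟨i0, j0, k0, l0, Fin.lt_def.mpr (by omega), Fin.lt_def.mpr (by omega),
        Fin.lt_def.mpr (by omega), Fin.lt_def.mpr (by omega), Fin.lt_def.mpr (by omega)⟩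
    have hmn' : m = n - 2 ∨ m = n - 1 := by omega
    rcases hmn' with hm | hm
    · subst hm
      have hlow : ∀ i : Fin n, (i : ℕ) < n - 2 → 2 ≤ (π i : ℕ) := by
        intro i hi
        have := (hskew i).mp hi
        omega
      have hpc : (π c : ℕ) < 2 := by have := hskew c; omega
      have hpd : (π d : ℕ) < 2 := by have := hskew d; omega
      have hmono : ∀ i j : Fin n, (i : ℕ) < (j : ℕ) → (j : ℕ) < n - 2 →
          (π i : ℕ) < (π j : ℕ) := by
        intro i j hij hj
        have h2 := hlow i (by omega)
        exact mono_of_avoid π hav i j c d hij (by omega) (by omega) (by omega)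
      have hch := chain π (n - 2) hmono
      have hmid : ∀ i : Fin n, (i : ℕ) ≤ n - 3 → (π i : ℕ) = (i : ℕ) + 2 := by
        intro i hi
        have h1 := hch a i (by omega) (by omega)
        have h2 := hch i b (by omega) (by omega)
        have h3 := hlow a (by omega)
        have h4 := (π b).isLt
        omega
      have hcd := inj_ne π (show (c : ℕ) ≠ (d : ℕ) by omega)
      have hcases : ((π c : ℕ) = 0 ∧ (π d : ℕ) = 1) ∨ ((π c : ℕ) = 1 ∧ (π d : ℕ) = 0) := by
        omega
      rcases hcases with ⟨h1, h2⟩ | ⟨h1, h2⟩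
      · left
        intro i
        by_cases e1 : (i : ℕ) = n - 2
        · rw [if_pos e1, show i = c from Fin.ext (by omega)]; exact h1
        · rw [if_neg e1]
          by_cases e2 : (i : ℕ) = n - 1
          · rw [if_pos e2, show i = d from Fin.ext (by omega)]; exact h2
          · rw [if_neg e2]; exact hmid i (by have := i.isLt; omega)
      · right; left
        intro i
        by_cases e1 : (i : ℕ) = n - 2
        · rw [if_pos e1, show i = c from Fin.ext (by omega)]; exact h1
        · rw [if_neg e1]
          by_cases e2 : (i : ℕ) = n - 1
          · rw [if_pos e2, show i = d from Fin.ext (by omega)]; exact h2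
          · rw [if_neg e2]; exact hmid i (by have := i.isLt; omega)
    · subst hm
      have hlow : ∀ i : Fin n, (i : ℕ) < n - 1 → 1 ≤ (π i : ℕ) := by
        intro i hi
        have := (hskew i).mp (by omega)
        omega
      have hpd : (π d : ℕ) = 0 := by have := hskew d; omega
      set ℓ := (π c : ℕ) with hℓdef
      have hℓ1 : 1 ≤ ℓ := hlow c (by omega)
      have hℓn : ℓ ≤ n - 1 := by have := (π c).isLt; omega
      have hmono : ∀ i j : Fin n, (i : ℕ) < (j : ℕ) → (j : ℕ) < n - 2 →
          (π i : ℕ) < (π j : ℕ) := by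
        intro i j hij hj
        have h2 := hlow i (by omega)
        exact mono_of_avoid π hav i j c d hij (by omega) (by omega) (by omega)
      have hch := chain π (n - 2) hmono
      have hbnd : ∀ i : Fin n, (i : ℕ) ≤ n - 3 →
          (i : ℕ) + 1 ≤ (π i : ℕ) ∧ (π i : ℕ) ≤ (i : ℕ) + 2 := by
        intro i hi
        have h1 := hch a i (by omega) (by omega)
        have h2 := hch i b (by omega) (by omega)
        have h3 := hlow a (by omega)
        have h4 := (π b).isLt
        omega
      have hform : ∀ i : Fin n, (i : ℕ) ≤ n - 3 →
          (π i : ℕ) = if (i : ℕ) + 1 < ℓ then (i : ℕ) + 1 else (i : ℕ) + 2 := by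
        intro i hi
        obtain ⟨hb1, hb2⟩ := hbnd i hi
        have hneℓ := inj_ne π (show (i : ℕ) ≠ (c : ℕ) by omega)
        by_cases hcℓ : (i : ℕ) + 1 < ℓ
        · rw [if_pos hcℓ]
          by_contra hcon
          obtain ⟨e, he⟩ : ∃ e : Fin n, (e : ℕ) = ℓ - 2 := ⟨⟨ℓ - 2, by omega⟩, rfl⟩
          have h4 := hch i e (by omega) (by omega)
          obtain ⟨he1, he2⟩ := hbnd e (by omega)
          have h5 := inj_ne π (show (e : ℕ) ≠ (c : ℕ) by omega)
          omega
        · rw [if_neg hcℓ]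
          by_contra hcon
          rcases (show ℓ = (i : ℕ) + 1 ∨ ℓ ≤ (i : ℕ) from by omega) with h | h
          · exact hneℓ (by omega)
          · obtain ⟨e, he⟩ : ∃ e : Fin n, (e : ℕ) = ℓ - 1 := ⟨⟨ℓ - 1, by omega⟩, rfl⟩
            have h4 := hch e i (by omega) (by omega)
            have h5 := hch a e (by omega) (by omega)
            have h6 := hlow a (by omega)
            have h7 := inj_ne π (show (e : ℕ) ≠ (c : ℕ) by omega)
            omega
      by_cases hℓ2 : 2 ≤ ℓ
      · right; right
        refine ⟨ℓ, hℓ2, hℓn, ?_⟩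
        intro i
        by_cases e1 : (i : ℕ) = n - 1
        · rw [if_pos e1, show i = d from Fin.ext (by omega)]; exact hpd
        · rw [if_neg e1]
          by_cases e2 : (i : ℕ) = n - 2
          · rw [if_pos e2, show i = c from Fin.ext (by omega)]
          · rw [if_neg e2]; exact hform i (by have := i.isLt; omega)
      · right; left
        have hℓ1' : ℓ = 1 := by omega
        intro i
        by_cases e1 : (i : ℕ) = n - 2
        · rw [if_pos e1, show i = c from Fin.ext (by omega)]; omega
        · rw [if_neg e1]
          by_cases e2 : (i : ℕ) = n - 1
          · rw [if_pos e2, show i = d from Fin.ext (by omega)]; exact hpd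
          · rw [if_neg e2]
            have h := hform i (by have := i.isLt; omega)
            rw [if_neg (by omega)] at h
            exact h
  · intro h
    constructor
    · rcases h with h | h | h
      · exact ⟨n - 2, by omega, by omega, fun i => by
          have hi := i.isLt; have h1 := h i; split_ifs at h1 <;> omega⟩
      · exact ⟨n - 2, by omega, by omega, fun i => by
          have hi := i.isLt; have h1 := h i; split_ifs at h1 <;> omega⟩
      · obtain ⟨ℓ, hℓ2, hℓn, h⟩ := h
        exact ⟨n - 1, by omega, by omega, fun i => by
          have hi := i.isLt; have h1 := h i; split_ifs at h1 <;> omega⟩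
    · rintro ⟨i, j, k, l, hij, hjk, hkl, h1, h2⟩
      rw [Fin.lt_def] at hij hjk hkl h1 h2
      have hi := i.isLt
      have hj := j.isLt
      have hk := k.isLt
      have hl := l.isLt
      rcases h with h | h | h
      · have hAi := h i
        have hAj := h j
        split_ifs at hAi hAj <;> omega
      · have hAi := h i
        have hAj := h j
        split_ifs at hAi hAj <;> omega
      · obtain ⟨ℓ, hℓ2, hℓn, h⟩ := h
        have hAi := h i
        have hAj := h j
        split_ifs at hAi hAj <;> omega

def fval (n ℓ i : ℕ) : ℕ :=
  if ℓ = 0 then (if i = n - 2 then 0 else if i = n - 1 then 1 else i + 2)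
  else (if i = n - 1 then 0 else if i = n - 2 then ℓ
    else if i + 1 < ℓ then i + 1 else i + 2)

lemma fval_zero {n : ℕ} (i : ℕ) :
    fval n 0 i = if i = n - 2 then 0 else if i = n - 1 then 1 else i + 2 := by
  unfold fval; rw [if_pos rfl]

lemma fval_pos {n : ℕ} (ℓ i : ℕ) (h : ℓ ≠ 0) :
    fval n ℓ i = if i = n - 1 then 0 else if i = n - 2 then ℓ
      else if i + 1 < ℓ then i + 1 else i + 2 := by
  unfold fval; rw [if_neg h]

lemma fval_lt {n : ℕ} (hn : 4 ≤ n) {ℓ i : ℕ} (hℓ : ℓ < n) (hi : i < n) : fval n ℓ i < n := by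
  unfold fval; split_ifs <;> omega

lemma fval_inj {n : ℕ} (hn : 4 ≤ n) {ℓ i j : ℕ} (hℓ : ℓ < n) (hi : i < n) (hj : j < n)
    (h : fval n ℓ i = fval n ℓ j) : i = j := by
  unfold fval at h; split_ifs at h <;> omega

noncomputable def qperm (n : ℕ) (hn : 4 ≤ n) (ℓ : Fin n) : Equiv.Perm (Fin n) :=
  Equiv.ofBijective (fun i : Fin n => ⟨fval n ℓ i, fval_lt hn ℓ.isLt i.isLt⟩)
    (Finite.injective_iff_bijective.mp fun i j h =>
      Fin.ext (fval_inj hn ℓ.isLt i.isLt j.isLt (congrArg Fin.val h)))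

lemma qperm_eq_of_form {n : ℕ} (hn : 4 ≤ n) (ℓ : ℕ) (hℓ : ℓ < n) (π : Equiv.Perm (Fin n))
    (h : ∀ i : Fin n, (π i : ℕ) = fval n ℓ (i : ℕ)) : qperm n hn ⟨ℓ, hℓ⟩ = π :=
  Equiv.ext fun i => Fin.ext (h i).symm

def phiVal (n : ℕ) (hn : 4 ≤ n) (π : Equiv.Perm (Fin n)) : ℕ :=
  if (π ⟨n - 1, by omega⟩ : ℕ) = 0 then (π ⟨n - 2, by omega⟩ : ℕ) else 0

lemma phiVal_lt (n : ℕ) (hn : 4 ≤ n) (π : Equiv.Perm (Fin n)) : phiVal n hn π < n := by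
  unfold phiVal
  split_ifs
  · exact (π _).isLt
  · omega

lemma phi_q {n : ℕ} (hn : 4 ≤ n) (ℓ : Fin n) : phiVal n hn (qperm n hn ℓ) = (ℓ : ℕ) := by
  have h1 : fval n (ℓ : ℕ) (n - 1) = if (ℓ : ℕ) = 0 then 1 else 0 := by
    unfold fval; split_ifs <;> omega
  have h2 : fval n (ℓ : ℕ) (n - 2) = if (ℓ : ℕ) = 0 then 0 else (ℓ : ℕ) := by
    unfold fval; split_ifs <;> omega
  show (if fval n (ℓ : ℕ) (n - 1) = 0 then fval n (ℓ : ℕ) (n - 2) else 0) = (ℓ : ℕ)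
  rw [h1, h2]
  have := ℓ.isLt
  split_ifs <;> omega

lemma qmem {n : ℕ} (hn : 4 ≤ n) (ℓ : Fin n) :
    SkewDecomposable (qperm n hn ℓ) ∧ ¬ ContainsLam (qperm n hn ℓ) := by
  apply (key hn (qperm n hn ℓ)).mpr
  rcases (show (ℓ : ℕ) = 0 ∨ (ℓ : ℕ) = 1 ∨ 2 ≤ (ℓ : ℕ) from by omega) with h | h | h
  · left
    intro i
    show fval n (ℓ : ℕ) (i : ℕ) = _
    rw [h, fval_zero]
  · right; left
    intro i
    show fval n (ℓ : ℕ) (i : ℕ) = _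
    rw [h, fval_pos 1 (i : ℕ) one_ne_zero]
    have := i.isLt
    split_ifs <;> omega
  · right; right
    refine ⟨(ℓ : ℕ), h, by have := ℓ.isLt; omega, ?_⟩
    intro i
    show fval n (ℓ : ℕ) (i : ℕ) = _
    rw [fval_pos (ℓ : ℕ) (i : ℕ) (by omega)]

/-- For `n ≥ 4`, the skew sum decomposable `n`-permutations avoiding `λ` are exactly
(written 0-based): `21[I_{n-2}, 12]`, `21[I_{n-2}, 21]`, and the permutations
`2431[I_{ℓ-1}, I_{n-ℓ-1}, 1, 1] = 21[1⋯(ℓ-1)(ℓ+1)⋯(n-1)ℓ, 1]` for `ℓ ∈ {2,…,n-1}`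
(1-based value `ℓ+1` in position `n-1` and value `1` last); in particular there
are exactly `n` of them. -/
theorem stmt_15 (n : ℕ) (hn : 4 ≤ n) :
    (∀ π : Equiv.Perm (Fin n),
      (SkewDecomposable π ∧ ¬ ContainsLam π) ↔
        ((∀ i : Fin n, (π i : ℕ) =
            if (i : ℕ) = n - 2 then 0 else if (i : ℕ) = n - 1 then 1 else (i : ℕ) + 2) ∨
         (∀ i : Fin n, (π i : ℕ) =
            if (i : ℕ) = n - 2 then 1 else if (i : ℕ) = n - 1 then 0 else (i : ℕ) + 2) ∨
         ∃ ℓ : ℕ, 2 ≤ ℓ ∧ ℓ ≤ n - 1 ∧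
           ∀ i : Fin n, (π i : ℕ) =
             if (i : ℕ) = n - 1 then 0 else if (i : ℕ) = n - 2 then ℓ
             else if (i : ℕ) + 1 < ℓ then (i : ℕ) + 1 else (i : ℕ) + 2)) ∧
    Nat.card {π : Equiv.Perm (Fin n) // SkewDecomposable π ∧ ¬ ContainsLam π} = n := by
  constructor
  · exact fun π => key hn π
  · have e : {π : Equiv.Perm (Fin n) // SkewDecomposable π ∧ ¬ ContainsLam π} ≃ Fin n :=
      { toFun := fun p => ⟨phiVal n hn p.1, phiVal_lt n hn p.1⟩
        invFun := fun ℓ => ⟨qperm n hn ℓ, qmem hn ℓ⟩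
        left_inv := by
          rintro ⟨π, hπ⟩
          apply Subtype.ext
          show qperm n hn ⟨phiVal n hn π, phiVal_lt n hn π⟩ = π
          rcases (key hn π).mp hπ with hA | hB | hC
          · have hq := qperm_eq_of_form hn 0 (by omega) π (fun i => by rw [hA i, fval_zero])
            have hv : phiVal n hn π = 0 := by rw [← hq]; exact phi_q hn ⟨0, by omega⟩
            have h2 : (⟨phiVal n hn π, phiVal_lt n hn π⟩ : Fin n) = ⟨0, by omega⟩ :=
              Fin.ext hv
            rw [h2]; exact hq
          · have hq := qperm_eq_of_form hn 1 (by omega) π (fun i => by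
              rw [hB i, fval_pos 1 (i : ℕ) one_ne_zero]
              have := i.isLt
              split_ifs <;> omega)
            have hv : phiVal n hn π = 1 := by rw [← hq]; exact phi_q hn ⟨1, by omega⟩
            have h2 : (⟨phiVal n hn π, phiVal_lt n hn π⟩ : Fin n) = ⟨1, by omega⟩ :=
              Fin.ext hv
            rw [h2]; exact hq
          · obtain ⟨ℓ, hℓ2, hℓn, hC⟩ := hC
            have hq := qperm_eq_of_form hn ℓ (by omega) π (fun i => by
              rw [hC i, fval_pos ℓ (i : ℕ) (by omega)])
            have hv : phiVal n hn π = ℓ := by rw [← hq]; exact phi_q hn ⟨ℓ, by omega⟩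
            have h2 : (⟨phiVal n hn π, phiVal_lt n hn π⟩ : Fin n) = ⟨ℓ, by omega⟩ :=
              Fin.ext hv
            rw [h2]; exact hq
        right_inv := fun ℓ => Fin.ext (phi_q hn ℓ) }
    rw [Nat.card_congr e, Nat.card_eq_fintype_card, Fintype.card_fin]
end

section
/- The only simple permutations avoiding the pattern set P = {2413, 2431, 4213, 3412, 3421, 4231, 4321, 4312} are 1, 12, 21, 3142 and 41352. -/
/-- `π` avoids `P = {2413, 2431, 4213, 3412, 3421, 4231, 4321, 4312}` (written 0-based). -/
def AvoidsCalP {n : ℕ} (π : Equiv.Perm (Fin n)) : Prop :=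
  ¬ ContainsPat ![1, 3, 0, 2] π ∧ ¬ ContainsPat ![1, 3, 2, 0] π ∧
  ¬ ContainsPat ![3, 1, 0, 2] π ∧ ¬ ContainsPat ![2, 3, 0, 1] π ∧
  ¬ ContainsPat ![2, 3, 1, 0] π ∧ ¬ ContainsPat ![3, 1, 2, 0] π ∧
  ¬ ContainsPat ![3, 2, 1, 0] π ∧ ¬ ContainsPat ![3, 2, 0, 1] π

/- ### tuple version of containment -/

def TupC {n : ℕ} (p : Fin 4 → Fin 4) (π : Equiv.Perm (Fin n)) : Prop :=
  ∃ i j k l : Fin n, i < j ∧ j < k ∧ k < l ∧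
    ∀ a b : Fin 4, p a < p b ↔ π (![i,j,k,l] a) < π (![i,j,k,l] b)

def AvoidsB {n : ℕ} (π : Equiv.Perm (Fin n)) : Prop :=
  ¬ TupC ![1, 3, 0, 2] π ∧ ¬ TupC ![1, 3, 2, 0] π ∧
  ¬ TupC ![3, 1, 0, 2] π ∧ ¬ TupC ![2, 3, 0, 1] π ∧
  ¬ TupC ![2, 3, 1, 0] π ∧ ¬ TupC ![3, 1, 2, 0] π ∧
  ¬ TupC ![3, 2, 1, 0] π ∧ ¬ TupC ![3, 2, 0, 1] π

def SimpleB {n : ℕ} (π : Equiv.Perm (Fin n)) : Prop :=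
  ∀ a b c : Fin (n+1), (a:ℕ) ≤ b → (b:ℕ) ≤ n →
    (∀ i : Fin n, ((a:ℕ) ≤ (i : ℕ) ∧ (i : ℕ) < b) ↔ ((c:ℕ) ≤ (π i : ℕ) ∧ (π i : ℕ) < c + ((b:ℕ) - a))) →
    (b:ℕ) - a ≤ 1 ∨ (b:ℕ) - a = n

instance {n : ℕ} (π : Equiv.Perm (Fin n)) : Decidable (SimpleB π) := by
  unfold SimpleB; infer_instance
instance {n : ℕ} (p : Fin 4 → Fin 4) (π : Equiv.Perm (Fin n)) : Decidable (TupC p π) := by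
  unfold TupC; infer_instance
instance {n : ℕ} (π : Equiv.Perm (Fin n)) : Decidable (AvoidsB π) := by
  unfold AvoidsB; infer_instance

lemma sm4 {n : ℕ} (i j k l : Fin n) (h1 : i < j) (h2 : j < k) (h3 : k < l) :
    StrictMono ![i,j,k,l] := by
  rw [Fin.strictMono_iff_lt_succ]
  simp only [Fin.forall_fin_succ, IsEmpty.forall_iff, Matrix.cons_val_zero,
    Matrix.cons_val_succ, and_true]
  exact ⟨h1, h2, h3⟩

lemma containsPat_iff_tupC {n : ℕ} (p : Fin 4 → Fin 4) (π : Equiv.Perm (Fin n)) :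
    ContainsPat p π ↔ TupC p π := by
  constructor
  · rintro ⟨f, hf, h⟩
    refine ⟨f 0, f 1, f 2, f 3, hf (by decide), hf (by decide), hf (by decide), fun a b => ?_⟩
    have e : (![f 0, f 1, f 2, f 3] : Fin 4 → Fin n) = f := by
      funext a; fin_cases a <;> rfl
    rw [e]; exact h a b
  · rintro ⟨i,j,k,l,h1,h2,h3,h⟩; exact ⟨![i,j,k,l], sm4 i j k l h1 h2 h3, h⟩

lemma avoids_iff {n : ℕ} (π : Equiv.Perm (Fin n)) : AvoidsCalP π ↔ AvoidsB π := by
  unfold AvoidsCalP AvoidsB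
  simp only [containsPat_iff_tupC]

lemma simple_iff {n : ℕ} (π : Equiv.Perm (Fin n)) : IsSimple π ↔ SimpleB π := by
  constructor
  · intro h a b c hab hbn hiff
    exact h a b c hab hbn hiff
  · intro h a b c hab hbn hiff
    by_cases hc : c ≤ n
    · exact h ⟨a, by omega⟩ ⟨b, by omega⟩ ⟨c, by omega⟩ hab hbn hiff
    · left
      rcases Nat.lt_or_ge a b with hlt | hge
      · exfalso
        have hi := (hiff ⟨a, by omega⟩).1 (by simp; omega)
        have := (π ⟨a, by omega⟩).isLt
        omega
      · omega

section Rules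
variable {n : ℕ} (π : Equiv.Perm (Fin n))

lemma mkContains (p : Fin 4 → Fin 4) (i j k l : Fin n)
    (h1 : (i:ℕ) < j) (h2 : (j:ℕ) < k) (h3 : (k:ℕ) < l)
    (hiff : ∀ a b : Fin 4, p a < p b ↔ π (![i,j,k,l] a) < π (![i,j,k,l] b)) :
    ContainsPat p π :=
  ⟨![i,j,k,l], sm4 i j k l (Fin.lt_def.mpr h1) (Fin.lt_def.mpr h2) (Fin.lt_def.mpr h3), hiff⟩

lemma vne (a b : Fin n) (hab : (a:ℕ) ≠ (b:ℕ)) : (π a:ℕ) ≠ (π b:ℕ) :=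
  fun e => hab (congrArg Fin.val (π.injective (Fin.val_injective e)))

lemma ruleA (hA : AvoidsCalP π) (i j k l : Fin n)
    (h1 : (i:ℕ) < j) (h2 : (j:ℕ) < k) (h3 : (k:ℕ) < l)
    (v1 : (π j:ℕ) < π i) (v2 : (π k:ℕ) < π i) (v3 : (π l:ℕ) < π i) :
    (π j:ℕ) < π k ∧ (π j:ℕ) < π l := by
  obtain ⟨_, _, h4213, _, _, h4231, h4321, h4312⟩ := hA
  by_contra hcon
  have njk := vne π j k (by omega)
  have njl := vne π j l (by omega)
  have nkl := vne π k l (by omega)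
  have cases4 : ((π l:ℕ) < π k ∧ (π k:ℕ) < π j) ∨ ((π k:ℕ) < π l ∧ (π l:ℕ) < π j) ∨
      ((π k:ℕ) < π j ∧ (π j:ℕ) < π l) ∨ ((π l:ℕ) < π j ∧ (π j:ℕ) < π k) := by
    omega
  rcases cases4 with ⟨c1, c2⟩ | ⟨c1, c2⟩ | ⟨c1, c2⟩ | ⟨c1, c2⟩
  · exact h4321 (mkContains π _ i j k l h1 h2 h3 (by
      simp only [Fin.forall_fin_succ, IsEmpty.forall_iff, Matrix.cons_val_zero,
        Matrix.cons_val_succ, Fin.lt_def, and_true,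
        show ((0:Fin 4):ℕ) = 0 from rfl, show ((1:Fin 4):ℕ) = 1 from rfl,
        show ((2:Fin 4):ℕ) = 2 from rfl, show ((3:Fin 4):ℕ) = 3 from rfl]
      omega))
  · exact h4312 (mkContains π _ i j k l h1 h2 h3 (by
      simp only [Fin.forall_fin_succ, IsEmpty.forall_iff, Matrix.cons_val_zero,
        Matrix.cons_val_succ, Fin.lt_def, and_true,
        show ((0:Fin 4):ℕ) = 0 from rfl, show ((1:Fin 4):ℕ) = 1 from rfl,
        show ((2:Fin 4):ℕ) = 2 from rfl, show ((3:Fin 4):ℕ) = 3 from rfl]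
      omega))
  · exact h4213 (mkContains π _ i j k l h1 h2 h3 (by
      simp only [Fin.forall_fin_succ, IsEmpty.forall_iff, Matrix.cons_val_zero,
        Matrix.cons_val_succ, Fin.lt_def, and_true,
        show ((0:Fin 4):ℕ) = 0 from rfl, show ((1:Fin 4):ℕ) = 1 from rfl,
        show ((2:Fin 4):ℕ) = 2 from rfl, show ((3:Fin 4):ℕ) = 3 from rfl]
      omega))
  · exact h4231 (mkContains π _ i j k l h1 h2 h3 (by
      simp only [Fin.forall_fin_succ, IsEmpty.forall_iff, Matrix.cons_val_zero,
        Matrix.cons_val_succ, Fin.lt_def, and_true,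
        show ((0:Fin 4):ℕ) = 0 from rfl, show ((1:Fin 4):ℕ) = 1 from rfl,
        show ((2:Fin 4):ℕ) = 2 from rfl, show ((3:Fin 4):ℕ) = 3 from rfl]
      omega))

lemma ruleB (hA : AvoidsCalP π) (i j k l : Fin n)
    (h1 : (i:ℕ) < j) (h2 : (j:ℕ) < k) (h3 : (k:ℕ) < l)
    (v1 : (π i:ℕ) < π j) (v2 : (π k:ℕ) < π j) (v3 : (π l:ℕ) < π j) :
    (π i:ℕ) < π k ∧ (π i:ℕ) < π l := by
  obtain ⟨h2413, h2431, _, h3412, h3421, _, _, _⟩ := hA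
  by_contra hcon
  have nik := vne π i k (by omega)
  have nil := vne π i l (by omega)
  have nkl := vne π k l (by omega)
  have cases4 : ((π l:ℕ) < π k ∧ (π k:ℕ) < π i) ∨ ((π k:ℕ) < π l ∧ (π l:ℕ) < π i) ∨
      ((π k:ℕ) < π i ∧ (π i:ℕ) < π l) ∨ ((π l:ℕ) < π i ∧ (π i:ℕ) < π k) := by
    omega
  rcases cases4 with ⟨c1, c2⟩ | ⟨c1, c2⟩ | ⟨c1, c2⟩ | ⟨c1, c2⟩
  · exact h3421 (mkContains π _ i j k l h1 h2 h3 (by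
      simp only [Fin.forall_fin_succ, IsEmpty.forall_iff, Matrix.cons_val_zero,
        Matrix.cons_val_succ, Fin.lt_def, and_true,
        show ((0:Fin 4):ℕ) = 0 from rfl, show ((1:Fin 4):ℕ) = 1 from rfl,
        show ((2:Fin 4):ℕ) = 2 from rfl, show ((3:Fin 4):ℕ) = 3 from rfl]
      omega))
  · exact h3412 (mkContains π _ i j k l h1 h2 h3 (by
      simp only [Fin.forall_fin_succ, IsEmpty.forall_iff, Matrix.cons_val_zero,
        Matrix.cons_val_succ, Fin.lt_def, and_true,
        show ((0:Fin 4):ℕ) = 0 from rfl, show ((1:Fin 4):ℕ) = 1 from rfl,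
        show ((2:Fin 4):ℕ) = 2 from rfl, show ((3:Fin 4):ℕ) = 3 from rfl]
      omega))
  · exact h2413 (mkContains π _ i j k l h1 h2 h3 (by
      simp only [Fin.forall_fin_succ, IsEmpty.forall_iff, Matrix.cons_val_zero,
        Matrix.cons_val_succ, Fin.lt_def, and_true,
        show ((0:Fin 4):ℕ) = 0 from rfl, show ((1:Fin 4):ℕ) = 1 from rfl,
        show ((2:Fin 4):ℕ) = 2 from rfl, show ((3:Fin 4):ℕ) = 3 from rfl]
      omega))
  · exact h2431 (mkContains π _ i j k l h1 h2 h3 (by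
      simp only [Fin.forall_fin_succ, IsEmpty.forall_iff, Matrix.cons_val_zero,
        Matrix.cons_val_succ, Fin.lt_def, and_true,
        show ((0:Fin 4):ℕ) = 0 from rfl, show ((1:Fin 4):ℕ) = 1 from rfl,
        show ((2:Fin 4):ℕ) = 2 from rfl, show ((3:Fin 4):ℕ) = 3 from rfl]
      omega))

end Rules

section Count
variable {n : ℕ} (π : Equiv.Perm (Fin n))

lemma count_below (M : Fin n)
    (h : ∀ i t : Fin n, (i:ℕ) < M → (M:ℕ) ≤ t → (π i:ℕ) < π t) :
    ∀ i : Fin n, ((i:ℕ) < M ↔ (π i:ℕ) < M) := by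
  have h1 : ∀ i : Fin n, (i:ℕ) < M → (π i:ℕ) < M := by
    intro i hi
    have hsub : (Finset.Ici M).image π ⊆ Finset.Ioi (π i) := by
      intro x hx
      simp only [Finset.mem_image, Finset.mem_Ici] at hx
      obtain ⟨t, ht, rfl⟩ := hx
      exact Finset.mem_Ioi.2 (Fin.lt_def.2 (h i t hi (Fin.le_def.1 ht)))
    have hc := Finset.card_le_card hsub
    rw [Finset.card_image_of_injective _ π.injective, Fin.card_Ici, Fin.card_Ioi] at hc
    have := (π i).isLt
    have := M.isLt
    omega
  intro i
  constructor
  · exact h1 i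
  · intro hv
    by_contra hcon
    push_neg at hcon
    have hsub : insert (π i) ((Finset.Iio M).image π) ⊆ Finset.Iio M := by
      intro x hx
      rcases Finset.mem_insert.1 hx with rfl | hx
      · exact Finset.mem_Iio.2 (Fin.lt_def.2 hv)
      · simp only [Finset.mem_image, Finset.mem_Iio] at hx
        obtain ⟨t, ht, rfl⟩ := hx
        exact Finset.mem_Iio.2 (Fin.lt_def.2 (h1 t (Fin.lt_def.1 ht)))
    have hni : π i ∉ (Finset.Iio M).image π := by
      simp only [Finset.mem_image, Finset.mem_Iio]
      rintro ⟨t, ht, he⟩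
      have := π.injective he
      subst this
      exact absurd (Fin.lt_def.1 ht) (by omega)
    have hc := Finset.card_le_card hsub
    rw [Finset.card_insert_of_notMem hni,
      Finset.card_image_of_injective _ π.injective, Fin.card_Iio] at hc
    omega

end Count

section Intervals
variable {n : ℕ} (π : Equiv.Perm (Fin n))

lemma intA (hS : IsSimple π) (c : ℕ) (hc : c ≤ n) (h : ∀ i : Fin n, ((i:ℕ) < c ↔ (π i:ℕ) < c)) :
    c ≤ 1 ∨ c = n := by
  have := hS 0 c 0 (by omega) hc (fun i => by
    have := h i
    constructor
    · intro hi; exact ⟨by omega, by omega⟩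
    · intro hi; exact ⟨by omega, by omega⟩)
  omega

lemma intB (hS : IsSimple π) (c : ℕ) (hc : c ≤ n) (h : ∀ i : Fin n, ((i:ℕ) < c ↔ (π i:ℕ) < c)) :
    n - c ≤ 1 ∨ c = 0 := by
  have := hS c n c (by omega) (le_refl n) (fun i => by
    have := h i
    have := i.isLt
    have := (π i).isLt
    constructor
    · intro hi; exact ⟨by omega, by omega⟩
    · intro hi; exact ⟨by omega, by omega⟩)
  omega

/-- positions {x, x+1} occupied by values {u, u+1} force `2 = n` (if `n ≥ 3`). -/
lemma int2 (hS : IsSimple π) (x y u v : Fin n) (hxy : (x:ℕ)+1 = y) (huv : (u:ℕ)+1 = v)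
    (hc : (π x = u ∧ π y = v) ∨ (π x = v ∧ π y = u)) : 2 ≤ 1 ∨ 2 = n := by
  have hb : (x:ℕ) + 2 ≤ n := by have := y.isLt; omega
  have key := hS (x:ℕ) ((x:ℕ)+2) (u:ℕ) (by omega) hb (fun i => by
    have hiv := i.isLt
    have huvlt := v.isLt
    constructor
    · intro hi
      have : i = x ∨ i = y := by
        rcases Nat.eq_or_lt_of_le hi.1 with he | hlt
        · left; exact Fin.val_injective he.symm ▸ rfl
        · right; exact Fin.val_injective (show (i:ℕ) = (y:ℕ) by omega)
      rcases this with rfl | rfl <;> rcases hc with ⟨e1, e2⟩ | ⟨e1, e2⟩ <;>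
        simp [e1, e2] <;> omega
    · intro hi
      have : π i = u ∨ π i = v := by
        rcases Nat.eq_or_lt_of_le hi.1 with he | hlt
        · left; exact Fin.val_injective he.symm ▸ rfl
        · right; exact Fin.val_injective (show ((π i):ℕ) = (v:ℕ) by omega)
      have : i = x ∨ i = y := by
        rcases this with he | he <;> rcases hc with ⟨e1, e2⟩ | ⟨e1, e2⟩
        · exact Or.inl (π.injective (he.trans e1.symm))
        · exact Or.inr (π.injective (he.trans e2.symm))
        · exact Or.inr (π.injective (he.trans e2.symm))
        · exact Or.inl (π.injective (he.trans e1.symm))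
      rcases this with rfl | rfl <;> omega)
  omega

/-- π fixes 0 implies n ≤ 2 -/
lemma fix0 (hS : IsSimple π) (x : Fin n) (hx : (x:ℕ) = 0) (hv : (π x:ℕ) = 0) : n ≤ 2 := by
  have hn : 1 ≤ n := by have := x.isLt; omega
  have h : ∀ i : Fin n, ((i:ℕ) < 1 ↔ (π i:ℕ) < 1) := by
    intro i
    constructor
    · intro hi
      have : i = x := Fin.val_injective (by omega)
      subst this; omega
    · intro hi
      have : π i = π x := Fin.val_injective (by omega)
      have : i = x := π.injective this
      subst this; omega
  have := intB π hS 1 (by omega) h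
  omega

/-- π fixes n-1 implies n ≤ 2 -/
lemma fixtop (hS : IsSimple π) (x : Fin n) (hx : (x:ℕ) = n-1) (hv : (π x:ℕ) = n-1) : n ≤ 2 := by
  have hn : 1 ≤ n := by have := x.isLt; omega
  have h : ∀ i : Fin n, ((i:ℕ) < n-1 ↔ (π i:ℕ) < n-1) := by
    intro i
    have h1 := i.isLt
    have h2 := (π i).isLt
    constructor
    · intro hi
      by_contra hco
      have : π i = π x := Fin.val_injective (by omega)
      have : i = x := π.injective this
      subst this; omega
    · intro hi
      by_contra hco
      have : i = x := Fin.val_injective (by omega)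
      subst this; omega
  have := intA π hS (n-1) (by omega) h
  omega

/-- π 0 = n-1 implies n ≤ 2 -/
lemma firsttop (hS : IsSimple π) (x : Fin n) (hx : (x:ℕ) = 0) (hv : (π x:ℕ) = n-1) : n ≤ 2 := by
  have hn : 1 ≤ n := by have := x.isLt; omega
  have key := hS 1 n 0 (by omega) (le_refl n) (fun i => by
    have h1 := i.isLt
    have h2 := (π i).isLt
    constructor
    · intro hi
      refine ⟨by omega, ?_⟩
      have : i ≠ x := fun e => by subst e; omega
      have : π i ≠ π x := fun e => this (π.injective e)
      have : (π i : ℕ) ≠ n - 1 := fun e => this (Fin.val_injective (by omega))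
      omega
    · intro hi
      have : (π i:ℕ) ≠ (π x:ℕ) := by omega
      have : i ≠ x := fun e => by subst e; omega
      have : (i:ℕ) ≠ (x:ℕ) := fun e => this (Fin.val_injective e)
      omega)
  omega

/-- if `π x` is below everything else then it is 0 -/
lemma eq_bot_of_min (x : Fin n) (h : ∀ t : Fin n, t ≠ x → (π x:ℕ) < π t) :
    (π x:ℕ) = 0 := by
  have hn : 0 < n := x.pos
  rcases eq_or_ne (π.symm ⟨0, hn⟩) x with he | he
  · have : π x = ⟨0, hn⟩ := by rw [← he, Equiv.apply_symm_apply]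
    rw [this]
  · have := h _ he
    rw [Equiv.apply_symm_apply] at this
    have hb0 : ((⟨0, hn⟩ : Fin n):ℕ) = 0 := rfl
    omega

/-- if `π x` is below everything except `π z = 0` then it is 1 -/
lemma eq_one_of_min (x z : Fin n) (hzx : z ≠ x) (hz : (π z:ℕ) = 0)
    (h : ∀ t : Fin n, t ≠ x → t ≠ z → (π x:ℕ) < π t) : (π x:ℕ) = 1 := by
  have hn : 1 < n := by
    have : (π z:ℕ) ≠ (π x:ℕ) := fun e => hzx (π.injective (Fin.val_injective e))
    have := (π x).isLt
    omega
  rcases eq_or_ne (π.symm ⟨1, hn⟩) x with he | he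
  · have : π x = ⟨1, hn⟩ := by rw [← he, Equiv.apply_symm_apply]
    rw [this]
  · rcases eq_or_ne (π.symm ⟨1, hn⟩) z with he2 | he2
    · exfalso
      have : π z = ⟨1, hn⟩ := by rw [← he2, Equiv.apply_symm_apply]
      rw [this] at hz; simp at hz
    · have := h _ he he2
      rw [Equiv.apply_symm_apply] at this
      have hb1 : ((⟨1, hn⟩ : Fin n):ℕ) = 1 := rfl
      have : (π x : ℕ) = 0 := by omega
      exfalso
      have : π x = π z := Fin.val_injective (by omega)
      exact hzx (π.injective this.symm)

end Intervals

lemma no_big {n : ℕ} (hn : 6 ≤ n) (π : Equiv.Perm (Fin n)) (hS : IsSimple π)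
    (hA : AvoidsCalP π) : False := by
  obtain ⟨z0, ez0⟩ : ∃ z : Fin n, (z:ℕ) = 0 := ⟨⟨0, by omega⟩, rfl⟩
  obtain ⟨z1, ez1⟩ : ∃ z : Fin n, (z:ℕ) = 1 := ⟨⟨1, by omega⟩, rfl⟩
  obtain ⟨z2, ez2⟩ : ∃ z : Fin n, (z:ℕ) = 2 := ⟨⟨2, by omega⟩, rfl⟩
  obtain ⟨z3, ez3⟩ : ∃ z : Fin n, (z:ℕ) = 3 := ⟨⟨3, by omega⟩, rfl⟩
  obtain ⟨w2, ew2⟩ : ∃ z : Fin n, (z:ℕ) = n-2 := ⟨⟨n-2, by omega⟩, rfl⟩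
  obtain ⟨w1, ew1⟩ : ∃ z : Fin n, (z:ℕ) = n-1 := ⟨⟨n-1, by omega⟩, rfl⟩
  have vinj : ∀ a b : Fin n, (π a:ℕ) = (π b:ℕ) → a = b :=
    fun a b e => π.injective (Fin.val_injective e)
  have pinj : ∀ a b : Fin n, (a:ℕ) = (b:ℕ) → a = b := fun a b e => Fin.val_injective e
  set M := π.symm w1 with hMdef
  have hMv : (π M:ℕ) = n-1 := by rw [hMdef, Equiv.apply_symm_apply, ew1]
  have hvlt : ∀ t : Fin n, (π t:ℕ) < n := fun t => (π t).isLt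
  have hplt : ∀ t : Fin n, (t:ℕ) < n := fun t => t.isLt
  have topv : ∀ t : Fin n, (t:ℕ) ≠ (M:ℕ) → (π t:ℕ) < n-1 := by
    intro t ht
    have h1 : (π t:ℕ) ≠ (π M:ℕ) := fun e => ht (congrArg Fin.val (vinj _ _ e))
    have := hvlt t
    omega
  rcases (by have := hplt M; omega :
      (M:ℕ) = n-1 ∨ (M:ℕ) = 0 ∨ (M:ℕ) = 1 ∨ (2 ≤ (M:ℕ) ∧ (M:ℕ) ≤ n-3) ∨ (M:ℕ) = n-2) with
    hc | hc | hc | ⟨hc1, hc2⟩ | hc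
  · exact absurd (fixtop π hS M hc hMv) (by omega)
  · exact absurd (firsttop π hS M hc hMv) (by omega)
  · -- M = 1
    have hmin : ∀ t : Fin n, t ≠ z0 → (π z0:ℕ) < π t := by
      intro t ht
      have htv : (t:ℕ) ≠ 0 := fun e => ht (pinj _ _ (by omega))
      have h00 : (π z0:ℕ) < n-1 := topv z0 (by omega)
      rcases eq_or_ne (t:ℕ) 1 with he | he
      · have het : t = M := pinj _ _ (by omega)
        rw [het, hMv]; omega
      · rcases eq_or_ne (t:ℕ) (n-1) with hl | hl
        · exact (ruleB π hA z0 M z2 t (by omega) (by omega) (by omega)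
            (by rw [hMv]; omega) (by rw [hMv]; exact topv z2 (by omega))
            (by rw [hMv]; exact topv t (by omega))).2
        · exact (ruleB π hA z0 M t w1 (by omega) (by omega) (by omega)
            (by rw [hMv]; omega) (by rw [hMv]; exact topv t (by omega))
            (by rw [hMv]; exact topv w1 (by omega))).1
    exact absurd (fix0 π hS z0 ez0 (eq_bot_of_min π z0 hmin)) (by omega)
  · -- 2 ≤ M ≤ n-3
    have h : ∀ i t : Fin n, (i:ℕ) < M → (M:ℕ) ≤ t → (π i:ℕ) < π t := by
      intro i t hi ht
      have hiM : (π i:ℕ) < n-1 := topv i (by omega)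
      rcases eq_or_ne (t:ℕ) (M:ℕ) with he | he
      · have het : t = M := pinj _ _ he
        rw [het, hMv]; omega
      · rcases eq_or_ne (t:ℕ) (n-1) with hl | hl
        · obtain ⟨k, ek⟩ : ∃ z : Fin n, (z:ℕ) = (M:ℕ)+1 := ⟨⟨(M:ℕ)+1, by omega⟩, rfl⟩
          exact (ruleB π hA i M k t (by omega) (by omega) (by omega)
            (by rw [hMv]; omega) (by rw [hMv]; exact topv k (by omega))
            (by rw [hMv]; exact topv t (by omega))).2
        · exact (ruleB π hA i M t w1 (by omega) (by omega) (by omega)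
            (by rw [hMv]; omega) (by rw [hMv]; exact topv t (by omega))
            (by rw [hMv]; exact topv w1 (by omega))).1
    have hcb := count_below π M h
    rcases intA π hS (M:ℕ) (by omega) (fun i => hcb i) with h1 | h1 <;> omega
  · -- M = n-2 : main case
    have hw2 : (π w2:ℕ) = n-1 := by
      have het : w2 = M := pinj _ _ (by omega)
      rw [het, hMv]
    set q := π.symm w2 with hqdef
    have hqv : (π q:ℕ) = n-2 := by rw [hqdef, Equiv.apply_symm_apply, ew2]
    have hqne : (q:ℕ) ≠ n-2 := by
      intro e
      have het : q = w2 := pinj _ _ (by omega)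
      rw [het] at hqv
      omega
    have top2 : ∀ t : Fin n, (t:ℕ) ≠ (q:ℕ) → (t:ℕ) ≠ n-2 → (π t:ℕ) < n-2 := by
      intro t h1 h2
      have e1 : (π t:ℕ) ≠ (π q:ℕ) := fun e => h1 (congrArg Fin.val (vinj _ _ e))
      have e2 : (π t:ℕ) < n-1 := topv t (by omega)
      omega
    rcases (by have := hplt q; omega :
        (q:ℕ) = n-1 ∨ (q:ℕ) = n-3 ∨ (q:ℕ) = 0 ∨ (q:ℕ) = 1 ∨ (2 ≤ (q:ℕ) ∧ (q:ℕ) ≤ n-4)) with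
      hq | hq | hq | hq | ⟨hq1, hq2⟩
    · -- q = n-1
      have het : w1 = q := pinj _ _ (by omega)
      have hw1v : (π w1:ℕ) = n-2 := by rw [het]; exact hqv
      rcases int2 π hS w2 w1 (π w1) (π w2) (by omega) (by omega)
        (Or.inr ⟨rfl, rfl⟩) with h | h <;> omega
    · -- q = n-3
      obtain ⟨w3, ew3⟩ : ∃ z : Fin n, (z:ℕ) = n-3 := ⟨⟨n-3, by omega⟩, rfl⟩
      have het : w3 = q := pinj _ _ (by omega)
      have hw3v : (π w3:ℕ) = n-2 := by rw [het]; exact hqv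
      rcases int2 π hS w3 w2 (π w3) (π w2) (by omega) (by omega)
        (Or.inl ⟨rfl, rfl⟩) with h | h <;> omega
    · -- q = 0
      have hq0 : (π z0:ℕ) = n-2 := by
        have het : z0 = q := pinj _ _ (by omega)
        rw [het]; exact hqv
      have hm1 : ∀ t : Fin n, t ≠ z1 → (π z1:ℕ) < π t := by
        intro t ht
        have htv : (t:ℕ) ≠ 1 := fun e => ht (pinj _ _ (by omega))
        have h1v : (π z1:ℕ) < n-2 := top2 z1 (by omega) (by omega)
        rcases eq_or_ne (t:ℕ) 0 with he | he
        · have het : t = z0 := pinj _ _ (by omega)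
          rw [het, hq0]; omega
        · rcases eq_or_ne (t:ℕ) (n-2) with he2 | he2
          · have het : t = w2 := pinj _ _ (by omega)
            rw [het, hw2]; omega
          · rcases eq_or_ne (t:ℕ) (n-1) with he3 | he3
            · exact (ruleA π hA z0 z1 z2 t (by omega) (by omega) (by omega)
                (by rw [hq0]; omega) (by rw [hq0]; exact top2 z2 (by omega) (by omega))
                (by rw [hq0]; exact top2 t (by omega) (by omega))).2
            · exact (ruleA π hA z0 z1 t w1 (by omega) (by omega) (by omega)
                (by rw [hq0]; omega) (by rw [hq0]; exact top2 t (by omega) (by omega))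
                (by rw [hq0]; exact top2 w1 (by omega) (by omega))).1
      have hz1v : (π z1:ℕ) = 0 := eq_bot_of_min π z1 hm1
      have hm2 : ∀ t : Fin n, t ≠ z2 → t ≠ z1 → (π z2:ℕ) < π t := by
        intro t ht ht1
        have htv : (t:ℕ) ≠ 2 := fun e => ht (pinj _ _ (by omega))
        have htv1 : (t:ℕ) ≠ 1 := fun e => ht1 (pinj _ _ (by omega))
        have h2v : (π z2:ℕ) < n-2 := top2 z2 (by omega) (by omega)
        rcases eq_or_ne (t:ℕ) 0 with he | he
        · have het : t = z0 := pinj _ _ (by omega)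
          rw [het, hq0]; omega
        · rcases eq_or_ne (t:ℕ) (n-2) with he2 | he2
          · have het : t = w2 := pinj _ _ (by omega)
            rw [het, hw2]; omega
          · rcases eq_or_ne (t:ℕ) (n-1) with he3 | he3
            · exact (ruleA π hA z0 z2 z3 t (by omega) (by omega) (by omega)
                (by rw [hq0]; omega) (by rw [hq0]; exact top2 z3 (by omega) (by omega))
                (by rw [hq0]; exact top2 t (by omega) (by omega))).2
            · exact (ruleA π hA z0 z2 t w1 (by omega) (by omega) (by omega)
                (by rw [hq0]; omega) (by rw [hq0]; exact top2 t (by omega) (by omega))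
                (by rw [hq0]; exact top2 w1 (by omega) (by omega))).1
      have hz2v : (π z2:ℕ) = 1 :=
        eq_one_of_min π z2 z1 (fun e => by have := congrArg Fin.val e; omega) hz1v hm2
      rcases int2 π hS z1 z2 (π z1) (π z2) (by omega) (by omega)
        (Or.inl ⟨rfl, rfl⟩) with h | h <;> omega
    · -- q = 1
      have hq1v : (π z1:ℕ) = n-2 := by
        have het : z1 = q := pinj _ _ (by omega)
        rw [het]; exact hqv
      have hm0 : ∀ t : Fin n, t ≠ z0 → (π z0:ℕ) < π t := by
        intro t ht
        have htv : (t:ℕ) ≠ 0 := fun e => ht (pinj _ _ (by omega))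
        have h0v : (π z0:ℕ) < n-2 := top2 z0 (by omega) (by omega)
        rcases eq_or_ne (t:ℕ) 1 with he | he
        · have het : t = z1 := pinj _ _ (by omega)
          rw [het, hq1v]; omega
        · rcases eq_or_ne (t:ℕ) (n-2) with he2 | he2
          · have het : t = w2 := pinj _ _ (by omega)
            rw [het, hw2]; omega
          · rcases eq_or_ne (t:ℕ) (n-1) with he3 | he3
            · exact (ruleB π hA z0 z1 z2 t (by omega) (by omega) (by omega)
                (by rw [hq1v]; omega) (by rw [hq1v]; exact top2 z2 (by omega) (by omega))
                (by rw [hq1v]; exact top2 t (by omega) (by omega))).2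
            · exact (ruleB π hA z0 z1 t w1 (by omega) (by omega) (by omega)
                (by rw [hq1v]; omega) (by rw [hq1v]; exact top2 t (by omega) (by omega))
                (by rw [hq1v]; exact top2 w1 (by omega) (by omega))).1
      exact absurd (fix0 π hS z0 ez0 (eq_bot_of_min π z0 hm0)) (by omega)
    · -- 2 ≤ q ≤ n-4
      have h : ∀ i t : Fin n, (i:ℕ) < q → (q:ℕ) ≤ t → (π i:ℕ) < π t := by
        intro i t hi ht
        have hiv : (π i:ℕ) < n-2 := top2 i (by omega) (by omega)
        rcases eq_or_ne (t:ℕ) (q:ℕ) with he | he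
        · have het : t = q := pinj _ _ he
          rw [het, hqv]; omega
        · rcases eq_or_ne (t:ℕ) (n-2) with he2 | he2
          · have het : t = w2 := pinj _ _ (by omega)
            rw [het, hw2]; omega
          · rcases eq_or_ne (t:ℕ) (n-1) with he3 | he3
            · obtain ⟨k, ek⟩ : ∃ z : Fin n, (z:ℕ) = (q:ℕ)+1 := ⟨⟨(q:ℕ)+1, by omega⟩, rfl⟩
              exact (ruleB π hA i q k t (by omega) (by omega) (by omega)
                (by rw [hqv]; omega) (by rw [hqv]; exact top2 k (by omega) (by omega))
                (by rw [hqv]; exact top2 t (by omega) (by omega))).2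
            · exact (ruleB π hA i q t w1 (by omega) (by omega) (by omega)
                (by rw [hqv]; omega) (by rw [hqv]; exact top2 t (by omega) (by omega))
                (by rw [hqv]; exact top2 w1 (by omega) (by omega))).1
      have hcb := count_below π q h
      rcases intA π hS (q:ℕ) (by omega) (fun i => hcb i) with h1 | h1 <;> omega


set_option maxRecDepth 100000 in
lemma small3 : ∀ π : Equiv.Perm (Fin 3), ¬ SimpleB π := by decide

set_option maxRecDepth 100000 in
lemma small4 : ∀ π : Equiv.Perm (Fin 4), SimpleB π → AvoidsB π → ∀ i : Fin 4, (π i : ℕ) =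
    if (i : ℕ) = 0 then 2 else if (i : ℕ) = 1 then 0
    else if (i : ℕ) = 2 then 3 else 1 := by decide

set_option maxRecDepth 400000 in
lemma small5 : ∀ π : Equiv.Perm (Fin 5), SimpleB π → AvoidsB π → ∀ i : Fin 5, (π i : ℕ) =
    if (i : ℕ) = 0 then 3 else if (i : ℕ) = 1 then 0
    else if (i : ℕ) = 2 then 2 else if (i : ℕ) = 3 then 4 else 1 := by decide

set_option maxRecDepth 100000 in
lemma rev1 : ∀ π : Equiv.Perm (Fin 1), SimpleB π ∧ AvoidsB π := by decide

set_option maxRecDepth 100000 in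
lemma rev2 : ∀ π : Equiv.Perm (Fin 2), SimpleB π ∧ AvoidsB π := by decide

set_option maxRecDepth 100000 in
lemma rev4 : ∀ π : Equiv.Perm (Fin 4), (∀ i : Fin 4, (π i : ℕ) =
    if (i : ℕ) = 0 then 2 else if (i : ℕ) = 1 then 0
    else if (i : ℕ) = 2 then 3 else 1) → SimpleB π ∧ AvoidsB π := by decide

set_option maxRecDepth 400000 in
lemma rev5 : ∀ π : Equiv.Perm (Fin 5), (∀ i : Fin 5, (π i : ℕ) =
    if (i : ℕ) = 0 then 3 else if (i : ℕ) = 1 then 0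
    else if (i : ℕ) = 2 then 2 else if (i : ℕ) = 3 then 4 else 1) → SimpleB π ∧ AvoidsB π := by
  decide

/-- The only simple permutations avoiding
`P = {2413, 2431, 4213, 3412, 3421, 4231, 4321, 4312}` are 1, 12, 21, 3142 and 41352. -/
theorem stmt_16 (n : ℕ) (hn : 1 ≤ n) (π : Equiv.Perm (Fin n)) :
    (IsSimple π ∧ AvoidsCalP π) ↔
      (n = 1 ∨ n = 2 ∨
        (n = 4 ∧ ∀ i : Fin n, (π i : ℕ) =
          if (i : ℕ) = 0 then 2 else if (i : ℕ) = 1 then 0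
          else if (i : ℕ) = 2 then 3 else 1) ∨
        (n = 5 ∧ ∀ i : Fin n, (π i : ℕ) =
          if (i : ℕ) = 0 then 3 else if (i : ℕ) = 1 then 0
          else if (i : ℕ) = 2 then 2 else if (i : ℕ) = 3 then 4 else 1)) := by
  constructor
  · rintro ⟨hS, hA⟩
    by_cases h6 : 6 ≤ n
    · exact (no_big h6 π hS hA).elim
    · push_neg at h6
      have hB := (simple_iff π).1 hS
      have hAB := (avoids_iff π).1 hA
      interval_cases n
      · exact Or.inl rfl
      · exact Or.inr (Or.inl rfl)
      · exact absurd hB (small3 π)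
      · exact Or.inr (Or.inr (Or.inl ⟨rfl, small4 π hB hAB⟩))
      · exact Or.inr (Or.inr (Or.inr ⟨rfl, small5 π hB hAB⟩))
  · rintro (rfl | rfl | ⟨rfl, h⟩ | ⟨rfl, h⟩)
    · exact ⟨(simple_iff π).2 (rev1 π).1, (avoids_iff π).2 (rev1 π).2⟩
    · exact ⟨(simple_iff π).2 (rev2 π).1, (avoids_iff π).2 (rev2 π).2⟩
    · exact ⟨(simple_iff π).2 (rev4 π h).1, (avoids_iff π).2 (rev4 π h).2⟩
    · exact ⟨(simple_iff π).2 (rev5 π h).1, (avoids_iff π).2 (rev5 π h).2⟩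
end
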